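/- arXiv:1905.05723 — 6 statements merged into one kernel-verified Lean document; each statement's English description precedes it below -/
import Mathlib

section
/- Let λ be a partition contained in the m×k rectangle, with Seidel shift λ↑1 defined by adding 1 to every part if λ₁ < k, and by deleting the first part and appending 0 if λ₁ = k. Then for every partition λ ⊂ m×k, applying the Seidel shift n = m+k times returns λ: λ↑n = λ. -/
/-- Seidel shift of a partition contained in the `m × k` rectangle,
viewed as a weakly decreasing function `ℕ → ℕ` vanishing from index `m` on. -/
def seidelShift (m k : ℕ) (lam : ℕ → ℕ) : ℕ → ℕ :=
  if lam 0 < k then (fun i => if i < m then lam i + 1 else 0)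
  else (fun i => lam (i + 1))

/-- `lam` is a partition contained in the `m × k` rectangle. -/
def IsPartIn (m k : ℕ) (lam : ℕ → ℕ) : Prop :=
  (∀ i j, i ≤ j → lam j ≤ lam i) ∧ lam 0 ≤ k ∧ ∀ i, m ≤ i → lam i = 0

/-! Encode `λ ⊂ m × k` by its beta numbers `λᵢ + (m - 1 - i)`, an `m`-element subset of
`ℤ/(m + k)`. Adding `1` to every part adds `1` to every beta number; deleting a full first part
turns the largest beta number `k + m - 1` into `0 ≡ k + m` and shifts the others down by one
index. So the Seidel shift acts on the beta set as the rotation `x ↦ x + 1`, whose `(m + k)`-th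
power is the identity, and the beta set determines `λ`. -/

def betaNumbers (m : ℕ) (lam : ℕ → ℕ) (i : Fin m) : ℕ := lam i + (m - 1 - i)

def cyclicBeta (m k : ℕ) (lam : ℕ → ℕ) : Set (ZMod (m + k)) :=
  Set.range fun i => (betaNumbers m lam i : ZMod (m + k))

section

variable {m k : ℕ} {lam mu : ℕ → ℕ}

theorem isPartIn_seidelShift (hlam : IsPartIn m k lam) :
    IsPartIn m k (seidelShift m k lam) := by
  obtain ⟨hanti, htop, hvan⟩ := hlam
  unfold seidelShift
  split_ifs with h0
  · refine ⟨fun i j hij => ?_, ?_, fun i hi => if_neg (by omega)⟩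
    · dsimp only
      split_ifs <;> first | omega | exact Nat.add_le_add_right (hanti i j hij) 1
    · dsimp only
      split_ifs <;> omega
  · exact ⟨fun i j hij => hanti _ _ (by omega), (hanti 0 1 (by omega)).trans htop,
      fun i hi => hvan _ (by omega)⟩

theorem betaNumbers_strictAnti (hlam : Antitone lam) : StrictAnti (betaNumbers m lam) :=
  fun i j hij => by
    have := hlam (Fin.le_of_lt hij)
    unfold betaNumbers
    omega

theorem betaNumbers_lt (hlam : IsPartIn m k lam) (i : Fin m) :
    betaNumbers m lam i < m + k := by
  have := hlam.1 0 i (Nat.zero_le _)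
  have := hlam.2.1
  unfold betaNumbers
  omega

theorem eq_of_betaNumbers_eq (hlam : ∀ i, m ≤ i → lam i = 0)
    (hmu : ∀ i, m ≤ i → mu i = 0) (h : betaNumbers m lam = betaNumbers m mu) : lam = mu := by
  funext i
  by_cases hi : i < m
  · simpa [betaNumbers] using congrFun h ⟨i, hi⟩
  · rw [hlam i (by omega), hmu i (by omega)]

theorem image_val_cyclicBeta (hlam : IsPartIn m k lam) :
    ZMod.val '' cyclicBeta m k lam = Set.range (betaNumbers m lam) := by
  rw [cyclicBeta, ← Set.range_comp]
  congr 1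
  funext i
  simp [ZMod.val_natCast, Nat.mod_eq_of_lt (betaNumbers_lt hlam i)]

theorem cyclicBeta_injOn : Set.InjOn (cyclicBeta m k) {lam | IsPartIn m k lam} := by
  intro lam hlam mu hmu h
  have hrange : Set.range (betaNumbers m lam) = Set.range (betaNumbers m mu) := by
    rw [← image_val_cyclicBeta hlam, ← image_val_cyclicBeta hmu, h]
  exact eq_of_betaNumbers_eq hlam.2.2 hmu.2.2 <|
    ((betaNumbers_strictAnti hlam.1).range_inj (betaNumbers_strictAnti hmu.1)).1 hrange

theorem betaNumbers_seidelShift_of_lt (h0 : lam 0 < k) :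
    betaNumbers m (seidelShift m k lam) = fun i => betaNumbers m lam i + 1 := by
  funext i
  simp only [betaNumbers, seidelShift, if_pos h0, if_pos i.isLt]
  omega

theorem cast_betaNumbers_seidelShift_of_eq (h0 : lam 0 = k) (hvan : lam m = 0) (i : Fin m) :
    (betaNumbers m (seidelShift m k lam) i : ZMod (m + k)) =
      betaNumbers m lam (finRotate m i) + 1 := by
  obtain _ | m := m
  · exact i.elim0
  simp only [betaNumbers, seidelShift, if_neg (not_lt.2 h0.ge), coe_finRotate]
  split_ifs with hi
  · subst hi
    have hn : ((lam 0 + m + 1 : ℕ) : ZMod (m + 1 + k)) = 0 := by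
      rw [h0, show k + m + 1 = m + 1 + k by omega, ZMod.natCast_self]
    simpa [hvan] using hn.symm
  · have hlt : (i : ℕ) < m := Fin.val_lt_last hi
    rw [← Nat.cast_succ]
    congr 1
    omega

theorem cyclicBeta_seidelShift (hlam : IsPartIn m k lam) :
    cyclicBeta m k (seidelShift m k lam) = (· + 1) '' cyclicBeta m k lam := by
  rw [cyclicBeta, cyclicBeta, ← Set.range_comp]
  rcases hlam.2.1.lt_or_eq with h0 | h0
  · simp [betaNumbers_seidelShift_of_lt h0, Function.comp_def]
  · refine Eq.trans ?_ ((finRotate m).surjective.range_comp _)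
    congr 1
    funext i
    exact cast_betaNumbers_seidelShift_of_eq h0 (hlam.2.2 m le_rfl) i

theorem isPartIn_iterate_seidelShift (hlam : IsPartIn m k lam) (p : ℕ) :
    IsPartIn m k ((seidelShift m k)^[p] lam) :=
  Function.Iterate.rec _ hlam (fun _ => isPartIn_seidelShift) p

theorem cyclicBeta_iterate_seidelShift (hlam : IsPartIn m k lam) (p : ℕ) :
    cyclicBeta m k ((seidelShift m k)^[p] lam) =
      (· + (p : ZMod (m + k))) '' cyclicBeta m k lam := by
  induction p with
  | zero => simp
  | succ p ih =>
    rw [Function.iterate_succ_apply', cyclicBeta_seidelShift (isPartIn_iterate_seidelShift hlam p),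
      ih, Set.image_image]
    push_cast
    simp only [add_assoc]

end

theorem seidel_shift_period_general (m k : ℕ) (lam : ℕ → ℕ) (hlam : IsPartIn m k lam) :
    (seidelShift m k)^[m + k] lam = lam := by
  refine cyclicBeta_injOn (isPartIn_iterate_seidelShift hlam _) hlam ?_
  rw [cyclicBeta_iterate_seidelShift hlam, ZMod.natCast_self]
  simp only [add_zero, Set.image_id']

/-- Applying the Seidel shift `n = m + k` times returns the partition. -/
theorem seidel_shift_period (m k : ℕ) (hm : 0 < m) (hk : 0 < k)
    (lam : ℕ → ℕ) (hlam : IsPartIn m k lam) :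
    (seidelShift m k)^[m + k] lam = lam :=
  seidel_shift_period_general m k lam hlam
end

section
/- For any partition λ contained in the m×k rectangle, the sum over p = 0, 1, ..., n-1 of the weights |λ↑p| of the Seidel shifts of λ equals (1/2)·k·m·n, where n = m+k. -/
open Finset

theorem Nat.injOn_add_mod (n a : ℕ) : Set.InjOn (fun b => (b + a) % n) (range n) := by
  intro x hx y hy hxy
  have hxy' : x ≡ y [MOD n] := Nat.ModEq.add_right_cancel' a hxy
  rwa [Nat.ModEq, Nat.mod_eq_of_lt (mem_range.1 hx), Nat.mod_eq_of_lt (mem_range.1 hy)] at hxy'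

theorem Nat.image_range_add_mod (n a : ℕ) : (range n).image (fun b => (b + a) % n) = range n := by
  refine eq_of_subset_of_card_le ?_ ?_
  · intro x hx
    obtain ⟨b, hb, rfl⟩ := mem_image.1 hx
    exact mem_range.2 (Nat.mod_lt _ (Nat.pos_of_ne_zero (by rintro rfl; simp at hb)))
  · rw [Finset.card_image_of_injOn (Nat.injOn_add_mod n a)]

theorem Nat.sum_range_add_mod (n a : ℕ) : ∑ b ∈ range n, (a + b) % n = ∑ b ∈ range n, b := by
  simp_rw [add_comm a]
  rw [← sum_image (f := fun b => b) (Nat.injOn_add_mod n a), Nat.image_range_add_mod]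

def betaSet (m : ℕ) (lam : ℕ → ℕ) : Finset ℕ :=
  (range m).image fun i => lam i + (m - 1 - i)

namespace IsPartIn

variable {m k : ℕ} {lam : ℕ → ℕ}

theorem apply_le (h : IsPartIn m k lam) (i : ℕ) : lam i ≤ k :=
  (h.1 0 i i.zero_le).trans h.2.1

theorem seidelShift (h : IsPartIn m k lam) : IsPartIn m k (seidelShift m k lam) := by
  obtain ⟨hanti, htop, hzero⟩ := h
  unfold _root_.seidelShift
  split_ifs with h0
  · refine ⟨fun i j hij => ?_, ?_, fun i hi => if_neg (Nat.not_lt.2 hi)⟩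
    · by_cases hj : j < m
      · simp only [if_pos hj, if_pos (hij.trans_lt hj)]
        exact Nat.add_le_add_right (hanti i j hij) 1
      · simp only [if_neg hj, Nat.zero_le]
    · dsimp only
      split_ifs <;> omega
  · exact ⟨fun i j hij => hanti _ _ (Nat.add_le_add_right hij 1),
      (hanti 0 1 zero_le_one).trans htop, fun i hi => hzero _ (by omega)⟩

theorem iterate_seidelShift (h : IsPartIn m k lam) (p : ℕ) :
    IsPartIn m k ((_root_.seidelShift m k)^[p] lam) := by
  induction p with
  | zero => exact h
  | succ p ih => rw [Function.iterate_succ_apply']; exact ih.seidelShift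

theorem injOn_beta (h : IsPartIn m k lam) :
    Set.InjOn (fun i => lam i + (m - 1 - i)) (range m) := by
  intro i hi j hj hij
  simp only [coe_range, Set.mem_Iio] at hi hj hij
  have := h.1 i j
  have := h.1 j i
  omega

theorem card_betaSet (h : IsPartIn m k lam) : #(betaSet m lam) = m := by
  rw [betaSet, card_image_of_injOn h.injOn_beta, card_range]

theorem sum_betaSet (h : IsPartIn m k lam) :
    ∑ b ∈ betaSet m lam, b = ∑ i ∈ range m, lam i + ∑ i ∈ range m, i := by
  rw [betaSet, sum_image h.injOn_beta, sum_add_distrib, sum_range_reflect (fun i => i) m]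

theorem betaSet_subset_range (h : IsPartIn m k lam) : betaSet m lam ⊆ range (m + k) := by
  intro b hb
  obtain ⟨i, hi, rfl⟩ := mem_image.1 hb
  have := h.apply_le i
  have := mem_range.1 hi
  exact mem_range.2 (by omega)

theorem betaSet_seidelShift (h : IsPartIn m k lam) :
    betaSet m (_root_.seidelShift m k lam) = (betaSet m lam).image fun b => (b + 1) % (m + k) := by
  rw [betaSet, betaSet, image_image, _root_.seidelShift]
  split_ifs with h0
  · refine image_congr fun i hi => ?_
    have hi : i < m := mem_range.1 hi
    have := h.1 0 i i.zero_le
    simp only [Function.comp_apply, if_pos hi]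
    rw [Nat.mod_eq_of_lt (by omega)]
    omega
  -- The bead at the last position `m + k - 1` wraps around to `0`; the others move up one step.
  · have htop : lam 0 = k := le_antisymm h.2.1 (Nat.not_lt.1 h0)
    conv_rhs => rw [← Nat.image_range_add_mod m 1, image_image]
    refine image_congr fun i hi => ?_
    have hi : i < m := mem_range.1 hi
    simp only [Function.comp_apply]
    by_cases hlast : i + 1 < m
    · have := h.apply_le (i + 1)
      rw [Nat.mod_eq_of_lt hlast, Nat.mod_eq_of_lt (by omega)]
      omega
    · have hm : i + 1 = m := by omega
      rw [hm, Nat.mod_self, h.2.2 m le_rfl, show lam 0 + (m - 1 - 0) + 1 = m + k by omega,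
        Nat.mod_self]
      omega

theorem betaSet_iterate_seidelShift (h : IsPartIn m k lam) (p : ℕ) :
    betaSet m ((_root_.seidelShift m k)^[p] lam)
      = (betaSet m lam).image fun b => (b + p) % (m + k) := by
  induction p with
  | zero =>
    rw [Function.iterate_zero_apply]
    refine image_id.symm.trans (image_congr fun b hb => ?_)
    exact (Nat.mod_eq_of_lt (mem_range.1 (h.betaSet_subset_range hb))).symm
  | succ p ih =>
    rw [Function.iterate_succ_apply', (h.iterate_seidelShift p).betaSet_seidelShift, ih,
      image_image]
    refine image_congr fun b _ => ?_
    simp only [Function.comp_apply, Nat.mod_add_mod, add_assoc]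

theorem sum_orbit_weight (h : IsPartIn m k lam) :
    ∑ p ∈ range (m + k), ∑ i ∈ range m, (_root_.seidelShift m k)^[p] lam i
        + (m + k) * ∑ i ∈ range m, i
      = m * ∑ r ∈ range (m + k), r := by
  have hstep (p : ℕ) : ∑ i ∈ range m, (_root_.seidelShift m k)^[p] lam i + ∑ i ∈ range m, i
      = ∑ b ∈ betaSet m lam, (b + p) % (m + k) := by
    rw [← (h.iterate_seidelShift p).sum_betaSet, h.betaSet_iterate_seidelShift,
      sum_image ((Nat.injOn_add_mod _ p).mono (coe_subset.2 h.betaSet_subset_range))]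
  calc _ = ∑ p ∈ range (m + k), ∑ b ∈ betaSet m lam, (b + p) % (m + k) := by
        rw [← sum_congr rfl fun p _ => hstep p, sum_add_distrib, sum_const, card_range,
          smul_eq_mul]
    _ = ∑ b ∈ betaSet m lam, ∑ r ∈ range (m + k), r := by
        rw [sum_comm]
        exact sum_congr rfl fun b _ => Nat.sum_range_add_mod _ b
    _ = m * ∑ r ∈ range (m + k), r := by rw [sum_const, h.card_betaSet, smul_eq_mul]

end IsPartIn

theorem seidel_orbit_weight_sum_general (m k : ℕ)
    (lam : ℕ → ℕ) (hlam : IsPartIn m k lam) :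
    2 * ∑ p ∈ Finset.range (m + k), ∑ i ∈ Finset.range m, (seidelShift m k)^[p] lam i
      = k * m * (m + k) := by
  obtain _ | m := m
  · simp
  have horbit := hlam.sum_orbit_weight
  have hgauss_m := sum_range_id_mul_two (m + 1)
  have hgauss_n := sum_range_id_mul_two (m + 1 + k)
  rw [Nat.add_sub_cancel] at hgauss_m
  rw [show m + 1 + k - 1 = m + k by omega] at hgauss_n
  linear_combination 2 * horbit - (m + 1 + k) * hgauss_m + (m + 1) * hgauss_n

/-- The total weight of the Seidel orbit of a partition `λ ⊆ m × k` is
`(1/2) k m n` where `n = m + k`:  `∑_{p=0}^{n-1} |λ↑p| = k m n / 2`. -/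
theorem seidel_orbit_weight_sum (m k : ℕ) (hm : 0 < m) (hk : 0 < k)
    (lam : ℕ → ℕ) (hlam : IsPartIn m k lam) :
    2 * ∑ p ∈ Finset.range (m + k), ∑ i ∈ Finset.range m, (seidelShift m k)^[p] lam i
      = k * m * (m + k) :=
  seidel_orbit_weight_sum_general m k lam hlam
end

section
/- Let h be a sequence in a commutative ring with h₀ = 1 and hᵢ = 0 for i < 0, define Δ_λ(h) = det(h_{λᵢ+j-i}) and the dual sequence e_p = Δ_{(1^p)}(h). Then for any partition λ, Δ_λ(e) = Δ_{λ'}(h), where λ' is the conjugate (transpose) partition. -/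
/-- The Jacobi–Trudi determinant `Δ_λ(h) = det(h_{λ_i + j - i})`. -/
noncomputable def jtDet {R : Type*} [CommRing R] (h : ℤ → R) {l : ℕ}
    (lam : Fin l → ℕ) : R :=
  Matrix.det (Matrix.of fun i j : Fin l => h ((lam i : ℤ) + (j : ℤ) - (i : ℤ)))

/-- The dual sequence `e_p = Δ_{(1^p)}(h)`, extended to integer indices by `0`
for negative indices. -/
noncomputable def dualSeqZ {R : Type*} [CommRing R] (h : ℤ → R) : ℤ → R :=
  fun p => if p < 0 then 0 else jtDet h (fun _ : Fin p.toNat => 1)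

/-!
The Toeplitz matrices `A = (h_{j-i})` and `B = ((-1)^{j-i} e_{j-i})` of size `L + K` are mutually
inverse: expanding `e_n` along its last column gives `∑_m (-1)^m h_m e_{n-m} = 0` for `n > 0`.
For `A * B = 1`, Jacobi's complementary minor identity reads `det A * det B₁₁ = det A₂₂`; apply it
after permuting rows and columns by the two bijections `Fin L ⊕ Fin K ≃ Fin (L + K)` given by
the beta-sets `{λ_i + L - 1 - i} ⊔ {L + j - λ'_j}` of `λ` and of the empty partition. Then `B₁₁` is
the (signed, transposed) Jacobi–Trudi matrix of `λ` in `e` and `A₂₂` that of `λ'` in `h`. The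
permutation between the two beta-sets has one inversion per cell of the diagram of `λ`, so all
signs are `(-1)^|λ|` and cancel.
-/

open Matrix Finset Equiv

namespace Matrix

variable {R : Type*} [CommRing R] {m n : Type*} [Fintype m] [Fintype n] [DecidableEq m]
  [DecidableEq n]

theorem det_submatrix_equiv_equiv (M : Matrix m m R) (e f : n ≃ m) :
    (M.submatrix e f).det = Perm.sign (e.symm.trans f) * M.det := by
  have : M.submatrix e f = (M.submatrix id (e.symm.trans f)).submatrix e e := by
    ext; simp
  rw [this, det_submatrix_equiv_self, det_permute']

theorem det_eq_one_of_isUpperTriangular [LinearOrder m] {M : Matrix m m R}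
    (hM : M.IsUpperTriangular) (hdiag : ∀ i, M i i = 1) : M.det = 1 := by
  simp [det_of_isUpperTriangular hM, hdiag]

theorem det_mul_det_toBlocks₁₁_of_mul_eq_one {A B : Matrix (m ⊕ n) (m ⊕ n) R}
    (hAB : A * B = 1) : A.det * B.toBlocks₁₁.det = A.toBlocks₂₂.det := by
  have hprod := congrArg (fun M => (M.toBlocks₁₁, M.toBlocks₂₁)) hAB
  rw [← A.fromBlocks_toBlocks, ← B.fromBlocks_toBlocks, fromBlocks_multiply, ← fromBlocks_one]
    at hprod
  simp only [toBlocks_fromBlocks₁₁, toBlocks_fromBlocks₂₁, Prod.mk.injEq] at hprod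
  have hmul : A * fromBlocks B.toBlocks₁₁ 0 B.toBlocks₂₁ 1
      = fromBlocks 1 A.toBlocks₁₂ 0 A.toBlocks₂₂ := by
    conv_lhs => rw [← A.fromBlocks_toBlocks]
    rw [fromBlocks_multiply, hprod.1, hprod.2]
    simp
  simpa [det_fromBlocks_zero₁₂, det_fromBlocks_zero₂₁] using congrArg det hmul

def toeplitz (a : ℤ → R) (N : ℕ) : Matrix (Fin N) (Fin N) R :=
  of fun i j => a ((j : ℤ) - i)

theorem det_toeplitz {a : ℤ → R} (h0 : a 0 = 1) (hneg : ∀ z < 0, a z = 0) (N : ℕ) :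
    (toeplitz a N).det = 1 := by
  refine det_eq_one_of_isUpperTriangular (fun i j hji => hneg _ ?_) fun i => by simp [toeplitz, h0]
  have : (j : ℕ) < i := hji
  omega

theorem toeplitz_mul_toeplitz_eq_one {a b : ℤ → R} (ha : ∀ z < 0, a z = 0)
    (hb : ∀ z < 0, b z = 0)
    (hab : ∀ n : ℕ, ∑ m ∈ range (n + 1), a m * b (n - m : ℕ) = if n = 0 then 1 else 0)
    (N : ℕ) : toeplitz a N * toeplitz b N = 1 := by
  ext i j
  let f : ℕ → R := fun k => a ((k : ℤ) - i) * b ((j : ℤ) - k)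
  have hf : ∀ k : ℕ, k < i ∨ j < k → f k = 0 := by
    rintro k (hk | hk)
    · simp [f, ha _ (by omega : (k : ℤ) - i < 0)]
    · simp [f, hb _ (by omega : (j : ℤ) - k < 0)]
  simp only [mul_apply, one_apply, toeplitz, of_apply]
  rw [Fin.sum_univ_eq_sum_range f]
  rcases lt_or_ge (j : ℕ) i with hji | hij
  · rw [if_neg (fun h => by simp [h] at hji)]
    exact sum_eq_zero fun k _ => hf k (by omega)
  · have hsupp : Ico (i : ℕ) (j + 1) ⊆ range N := fun k hk => by
      have := j.isLt
      simp only [mem_Ico, mem_range] at hk ⊢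
      omega
    rw [← sum_subset hsupp fun k _ hk => hf k (by simp only [mem_Ico] at hk; omega),
      sum_Ico_eq_sum_range, show (j : ℕ) + 1 - i = (j - i : ℕ) + 1 by omega]
    convert hab (j - i) using 2 with m hm
    · simp only [f, mem_range] at hm ⊢
      congr 2 <;> omega
    · simp only [Fin.ext_iff]
      omega

end Matrix

theorem Equiv.Perm.sign_symm_trans_eq_prod {ι : Type*} [Fintype ι] {n : ℕ} (ρ σ : ι ≃ Fin n) :
    Perm.sign (ρ.symm.trans σ) = ∏ b, ∏ a, if ρ a < ρ b ∧ σ b < σ a then -1 else 1 := by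
  rw [Perm.sign_eq_prod_prod_Iio, ← ρ.prod_comp]
  refine prod_congr rfl fun b _ => ?_
  rw [← Finset.filter_gt_eq_Iio, prod_filter, ← ρ.prod_comp]
  refine prod_congr rfl fun a _ => ?_
  simp only [Equiv.trans_apply, Equiv.symm_apply_apply]
  by_cases hab : ρ a < ρ b
  · have : σ a ≠ σ b := fun h => hab.ne (by rw [σ.injective h])
    rcases this.lt_or_gt with h | h <;> simp [hab, h, h.not_gt]
  · simp [hab]

namespace JacobiTrudi

section DualSequence

variable {R : Type*} [CommRing R] (h : ℤ → R)

def dualMatrix (p : ℕ) : Matrix (Fin p) (Fin p) R :=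
  of fun r c => h (1 + c - r)

theorem dualSeqZ_natCast (p : ℕ) : dualSeqZ h p = (dualMatrix h p).det := by
  simp [dualSeqZ, jtDet, dualMatrix]

variable {h}

theorem det_dualMatrix_submatrix_succAbove_castSucc (h0 : h 0 = 1)
    (hneg : ∀ z < 0, h z = 0) {p : ℕ} (i : Fin (p + 1)) :
    ((dualMatrix h (p + 1)).submatrix i.succAbove Fin.castSucc).det = (dualMatrix h i).det := by
  set M := (dualMatrix h (p + 1)).submatrix i.succAbove Fin.castSucc
  have hM : ∀ r c : Fin p, M r c = h (1 + c - (if (r : ℕ) < i then r else r + 1 : ℕ)) := by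
    intro r c
    simp only [M, submatrix_apply, dualMatrix, of_apply, Fin.val_castSucc]
    congr 3
    rcases lt_or_ge (r : ℕ) i with hr | hr
    · rw [Fin.succAbove_of_castSucc_lt _ _ hr, if_pos hr, Fin.val_castSucc]
    · rw [Fin.succAbove_of_le_castSucc _ _ hr, if_neg (not_lt.2 hr), Fin.val_succ]
  -- `M` is block upper triangular: `dualMatrix h i` above, a unitriangular block below.
  rw [twoBlockTriangular_det M (fun k => (k : ℕ) < i)
    (fun r hr c hc => by rw [hM, if_neg hr]; exact hneg _ (by omega))]
  have htop : (toSquareBlockProp M fun k => (k : ℕ) < i).det = (dualMatrix h i).det := by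
    rw [← det_submatrix_equiv_self (Fin.castLEOrderIso (Nat.lt_succ_iff.1 i.isLt)).toEquiv]
    congr 1
    ext r c
    simp [toSquareBlockProp, toBlock, hM, dualMatrix]
  have hbot : (toSquareBlockProp M fun k => ¬(k : ℕ) < i).det = 1 := by
    refine det_eq_one_of_isUpperTriangular (fun r c hcr => ?_) fun r => ?_
    · rw [toSquareBlockProp, toBlock_apply, hM, if_neg r.2]
      exact hneg _ (by have : (c : ℕ) < r := hcr; omega)
    · rw [toSquareBlockProp, toBlock_apply, hM, if_neg r.2, ← h0]
      congr 1
      push_cast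
      ring
  rw [htop, hbot, mul_one]

theorem dualSeqZ_succ (h0 : h 0 = 1) (hneg : ∀ z < 0, h z = 0) (p : ℕ) :
    dualSeqZ h (p + 1 : ℕ) =
      ∑ k ∈ range (p + 1), (-1) ^ (k + p) * h (p + 1 - k : ℕ) * dualSeqZ h k := by
  rw [dualSeqZ_natCast, det_succ_column _ (Fin.last p), ← Fin.sum_univ_eq_sum_range]
  refine Fintype.sum_congr _ _ fun i => ?_
  rw [Fin.succAbove_last, det_dualMatrix_submatrix_succAbove_castSucc h0 hneg, dualSeqZ_natCast]
  simp only [dualMatrix, of_apply, Fin.val_last]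
  congr 3
  have := i.isLt
  omega

theorem jtDet_neg_one_pow_natAbs_mul (e : ℤ → R) {l : ℕ} (lam : Fin l → ℕ) :
    jtDet (fun z => (-1) ^ z.natAbs * e z) lam = (-1) ^ (∑ i, lam i) * jtDet e lam := by
  have hsplit : (of fun i j : Fin l => (-1 : R) ^ ((lam i : ℤ) + j - i).natAbs * e (lam i + j - i))
      = of fun i j : Fin l => (-1) ^ (lam i + i : ℕ) * ((-1) ^ (j : ℕ) * e (lam i + j - i)) := by
    ext i j
    rw [of_apply, of_apply, ← mul_assoc, ← pow_add]
    congr 1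
    exact neg_one_pow_congr (by simp only [Nat.even_iff]; omega)
  have hcol := det_mul_column (fun i : Fin l => (-1 : R) ^ (lam i + i : ℕ))
    (of fun i j : Fin l => (-1) ^ (j : ℕ) * e (lam i + j - i))
  have hrow := det_mul_row (fun j : Fin l => (-1 : R) ^ (j : ℕ))
    (of fun i j : Fin l => e (lam i + j - i))
  simp only [of_apply] at hcol hrow
  rw [jtDet, jtDet, hsplit, hcol, hrow, ← mul_assoc, prod_pow_eq_pow_sum, prod_pow_eq_pow_sum,
    ← pow_add, sum_add_distrib]
  congr 1
  exact neg_one_pow_congr (by simp only [Nat.even_iff]; omega)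

variable (h)

noncomputable def signedDual (z : ℤ) : R :=
  (-1) ^ z.natAbs * dualSeqZ h z

variable {h}

theorem jtDet_signedDual {l : ℕ} (lam : Fin l → ℕ) :
    jtDet (signedDual h) lam = (-1) ^ (∑ i, lam i) * jtDet (dualSeqZ h) lam :=
  jtDet_neg_one_pow_natAbs_mul _ lam

theorem signedDual_neg {z : ℤ} (hz : z < 0) : signedDual h z = 0 := by
  simp [signedDual, dualSeqZ, hz]

theorem sum_range_mul_signedDual (h0 : h 0 = 1) (hneg : ∀ z < 0, h z = 0) (n : ℕ) :
    ∑ m ∈ range (n + 1), h m * signedDual h (n - m : ℕ) = if n = 0 then 1 else 0 := by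
  rcases n with _ | p
  · simpa [signedDual, h0] using dualSeqZ_natCast h 0
  -- Split off the `m = 0` term `(-1)^(p+1) e_{p+1}`, expand it by `dualSeqZ_succ` and reindex the
  -- rest by `k = p - m`: the two sums cancel termwise.
  rw [if_neg p.succ_ne_zero, sum_range_succ', ← sum_range_reflect, Nat.cast_zero, h0, one_mul,
    signedDual, Nat.sub_zero, dualSeqZ_succ h0 hneg, mul_sum, ← sum_add_distrib]
  refine sum_eq_zero fun k hk => ?_
  have hk : k ≤ p := Nat.lt_succ_iff.1 (mem_range.1 hk)
  rw [signedDual, show p + 1 - (p + 1 - 1 - k + 1) = k by omega,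
    show ((p + 1 - 1 - k + 1 : ℕ) : ℤ) = (p + 1 - k : ℕ) by omega, Int.natAbs_natCast,
    Int.natAbs_natCast]
  have hsign : (-1 : R) ^ (p + 1) * (-1) ^ (k + p) = -(-1) ^ k := by
    rw [← pow_add, neg_one_pow_congr (n := k + 1) (by simp only [Nat.even_iff]; omega), pow_succ,
      mul_neg_one]
  linear_combination (h (p + 1 - k : ℕ) * dualSeqZ h k) * hsign

end DualSequence

section Conjugate

variable {L : ℕ}

def conjugate (lam : Fin L → ℕ) (j : ℕ) : ℕ :=
  #{i | j < lam i}

variable {lam : Fin L → ℕ}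

theorem conjugate_le (j : ℕ) : conjugate lam j ≤ L :=
  (card_filter_le _ _).trans_eq (card_fin L)

theorem conjugate_antitone : Antitone (conjugate lam) := fun _ _ hjj' =>
  card_le_card <| monotone_filter_right _ fun _ _ h => hjj'.trans_lt h

theorem conjugate_zero (j : ℕ) : conjugate (fun _ : Fin L => 0) j = 0 := by
  simp [conjugate]

theorem lt_conjugate_iff (hlam : Antitone lam) (i : Fin L) (j : ℕ) :
    (i : ℕ) < conjugate lam j ↔ j < lam i := by
  constructor
  · intro hi
    by_contra! hji
    have : conjugate lam j ≤ #{i' : Fin L | (i' : ℕ) < i} := card_le_card fun i' hi' => by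
      simp only [mem_filter, mem_univ, true_and] at hi' ⊢
      by_contra! hii'
      exact (hlam (Fin.le_def.2 hii')).trans hji |>.not_gt hi'
    rw [Fin.card_filter_val_lt] at this
    omega
  · intro hji
    have : #{i' : Fin L | (i' : ℕ) < i + 1} ≤ conjugate lam j := card_le_card fun i' hi' => by
      simp only [mem_filter, mem_univ, true_and] at hi' ⊢
      exact hji.trans_le (hlam (Fin.le_def.2 (Nat.lt_succ_iff.1 hi')))
    rw [Fin.card_filter_val_lt] at this
    omega

end Conjugate

section Beta

variable {L K : ℕ}

def betaFun (lam : Fin L → ℕ) (hK : ∀ i, lam i ≤ K) : Fin L ⊕ Fin K → Fin (L + K) :=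
  Sum.elim (fun i => ⟨lam i + (L - 1 - i), by have := hK i; omega⟩)
    (fun j => ⟨L + j - conjugate lam j, by omega⟩)

variable {lam : Fin L → ℕ} (hK : ∀ i, lam i ≤ K)

theorem betaFun_inl (i : Fin L) : (betaFun lam hK (.inl i) : ℕ) = lam i + (L - 1 - i) := rfl

theorem betaFun_inr (j : Fin K) : (betaFun lam hK (.inr j) : ℕ) = L + j - conjugate lam j := rfl

theorem betaFun_inr_lt_inl_iff (hlam : Antitone lam) (i : Fin L) (j : Fin K) :
    betaFun lam hK (.inr j) < betaFun lam hK (.inl i) ↔ (j : ℕ) < lam i := by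
  have := lt_conjugate_iff hlam i j
  have := conjugate_le (lam := lam) j
  rw [Fin.lt_def, betaFun_inl, betaFun_inr]
  omega

theorem betaFun_inl_lt_inr_iff (hlam : Antitone lam) (i : Fin L) (j : Fin K) :
    betaFun lam hK (.inl i) < betaFun lam hK (.inr j) ↔ lam i ≤ j := by
  have := lt_conjugate_iff hlam i j
  have := conjugate_le (lam := lam) j
  rw [Fin.lt_def, betaFun_inl, betaFun_inr]
  omega

theorem betaFun_inl_ne_inr (hlam : Antitone lam) (i : Fin L) (j : Fin K) :
    betaFun lam hK (.inl i) ≠ betaFun lam hK (.inr j) := by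
  rcases lt_or_ge (j : ℕ) (lam i) with hj | hj
  · exact ((betaFun_inr_lt_inl_iff hK hlam i j).2 hj).ne'
  · exact ((betaFun_inl_lt_inr_iff hK hlam i j).2 hj).ne

theorem betaFun_injective (hlam : Antitone lam) : Function.Injective (betaFun lam hK) := by
  rintro (i | j) (i' | j') h
  · have := congrArg Fin.val h
    rw [betaFun_inl, betaFun_inl] at this
    rcases le_total i i' with hii' | hii' <;> have := hlam hii' <;>
      simp only [Sum.inl.injEq, Fin.ext_iff] <;> omega
  · exact absurd h (betaFun_inl_ne_inr hK hlam i j')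
  · exact absurd h.symm (betaFun_inl_ne_inr hK hlam i' j)
  · have := congrArg Fin.val h
    rw [betaFun_inr, betaFun_inr] at this
    have := conjugate_le (lam := lam) j
    have := conjugate_le (lam := lam) j'
    rcases le_total j j' with hjj' | hjj' <;> have := conjugate_antitone (lam := lam) hjj' <;>
      simp only [Sum.inr.injEq, Fin.ext_iff] <;> omega

noncomputable def betaEquiv (hlam : Antitone lam) : Fin L ⊕ Fin K ≃ Fin (L + K) :=
  .ofBijective _ ((Fintype.bijective_iff_injective_and_card _).2
    ⟨betaFun_injective hK hlam, by simp⟩)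

theorem betaEquiv_apply (hlam : Antitone lam) (x : Fin L ⊕ Fin K) :
    betaEquiv hK hlam x = betaFun lam hK x := rfl

variable (L K) in
noncomputable def emptyBetaEquiv : Fin L ⊕ Fin K ≃ Fin (L + K) :=
  betaEquiv (fun _ : Fin L => K.zero_le) antitone_const

theorem emptyBetaEquiv_inl (i : Fin L) : (emptyBetaEquiv L K (.inl i) : ℕ) = L - 1 - i := by
  simp [emptyBetaEquiv, betaEquiv_apply, betaFun_inl]

theorem emptyBetaEquiv_inr (j : Fin K) : (emptyBetaEquiv L K (.inr j) : ℕ) = L + j := by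
  simp [emptyBetaEquiv, betaEquiv_apply, betaFun_inr, conjugate_zero]

theorem sign_betaEquiv (hlam : Antitone lam) :
    Perm.sign ((betaEquiv hK hlam).symm.trans (emptyBetaEquiv L K)) = (-1) ^ ∑ i, lam i := by
  rw [Perm.sign_symm_trans_eq_prod]
  have hll (i i' : Fin L) : ¬(betaFun lam hK (.inl i) < betaFun lam hK (.inl i') ∧
      emptyBetaEquiv L K (.inl i') < emptyBetaEquiv L K (.inl i)) := by
    simp only [Fin.lt_def, betaFun_inl, emptyBetaEquiv_inl]
    rcases le_total i i' with hii' | hii' <;> have := hlam hii' <;> omega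
  have hrr (j j' : Fin K) : ¬(betaFun lam hK (.inr j) < betaFun lam hK (.inr j') ∧
      emptyBetaEquiv L K (.inr j') < emptyBetaEquiv L K (.inr j)) := by
    simp only [Fin.lt_def, betaFun_inr, emptyBetaEquiv_inr]
    have := conjugate_le (lam := lam) j
    have := conjugate_le (lam := lam) j'
    rcases le_total j j' with hjj' | hjj' <;> have := conjugate_antitone (lam := lam) hjj' <;> omega
  have hrl (i : Fin L) (j : Fin K) : emptyBetaEquiv L K (.inl i) < emptyBetaEquiv L K (.inr j) := by
    rw [Fin.lt_def, emptyBetaEquiv_inl, emptyBetaEquiv_inr]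
    omega
  simp only [Fintype.prod_sum_type, hll, hrr, hrl, hrl _ _ |>.not_gt, and_false, and_true,
    if_false, prod_const_one, one_mul, mul_one, betaEquiv_apply, betaFun_inr_lt_inl_iff hK hlam]
  rw [← prod_pow_eq_pow_sum]
  refine prod_congr rfl fun i _ => ?_
  rw [prod_ite, prod_const, prod_const_one, mul_one, Fin.card_filter_val_lt, min_eq_right (hK i)]

end Beta

section Blocks

variable {R : Type*} [CommRing R] {L K : ℕ} {lam : Fin L → ℕ} (hK : ∀ i, lam i ≤ K)
  (hlam : Antitone lam)

theorem det_toeplitz_submatrix_betaEquiv {a : ℤ → R} (h0 : a 0 = 1) (hneg : ∀ z < 0, a z = 0) :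
    ((toeplitz a (L + K)).submatrix (betaEquiv hK hlam) (emptyBetaEquiv L K)).det
      = (-1) ^ ∑ i, lam i := by
  rw [det_submatrix_equiv_equiv, sign_betaEquiv, det_toeplitz h0 hneg]
  push_cast
  ring

theorem det_toBlocks₁₁_toeplitz_submatrix_betaEquiv (a : ℤ → R) :
    ((toeplitz a (L + K)).submatrix (emptyBetaEquiv L K) (betaEquiv hK hlam)).toBlocks₁₁.det
      = jtDet a lam := by
  rw [jtDet, ← det_transpose]
  congr 1
  ext i j
  simp only [toBlocks₁₁, toeplitz, of_apply, submatrix_apply, transpose_apply, betaEquiv_apply]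
  congr 1
  rw [betaFun_inl, emptyBetaEquiv_inl]
  omega

theorem det_toBlocks₂₂_toeplitz_submatrix_betaEquiv (a : ℤ → R) :
    ((toeplitz a (L + K)).submatrix (betaEquiv hK hlam) (emptyBetaEquiv L K)).toBlocks₂₂.det
      = jtDet a fun j : Fin K => conjugate lam j := by
  rw [jtDet]
  congr 1
  ext i j
  simp only [toBlocks₂₂, toeplitz, of_apply, submatrix_apply, betaEquiv_apply]
  congr 1
  have := conjugate_le (lam := lam) i
  rw [betaFun_inr, emptyBetaEquiv_inr]
  omega

end Blocks

end JacobiTrudi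

open JacobiTrudi

/-- `Δ_λ(e) = Δ_{λ'}(h)` where `λ'` is the conjugate partition and `e` is the
dual sequence of `h`.  Here `λ` has at most `L` parts and largest part at most
`K`, and `λ'_j = #{i : λ_i ≥ j}`. -/
theorem jtDet_dual_conjugate {R : Type*} [CommRing R] (h : ℤ → R)
    (h0 : h 0 = 1) (hneg : ∀ i : ℤ, i < 0 → h i = 0)
    (L K : ℕ) (lam : Fin L → ℕ)
    (hanti : ∀ i j : Fin L, i ≤ j → lam j ≤ lam i)
    (hK : ∀ i, lam i ≤ K) :
    jtDet (dualSeqZ h) lam =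
      jtDet h (fun j : Fin K =>
        (Finset.univ.filter fun i : Fin L => (j : ℕ) < lam i).card) := by
  have hlam : Antitone lam := fun i j hij => hanti i j hij
  set σ := betaEquiv hK hlam
  set ρ := emptyBetaEquiv L K
  have hAB : (toeplitz h (L + K)).submatrix σ ρ * (toeplitz (signedDual h) (L + K)).submatrix ρ σ
      = 1 := by
    rw [submatrix_mul_equiv, toeplitz_mul_toeplitz_eq_one hneg (fun _ => signedDual_neg)
      (sum_range_mul_signedDual h0 hneg), submatrix_one_equiv]
  have key := det_mul_det_toBlocks₁₁_of_mul_eq_one hAB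
  rw [det_toeplitz_submatrix_betaEquiv hK hlam h0 hneg,
    det_toBlocks₁₁_toeplitz_submatrix_betaEquiv hK hlam,
    det_toBlocks₂₂_toeplitz_submatrix_betaEquiv hK hlam, jtDet_signedDual] at key
  have hsq : ((-1) ^ ∑ i, lam i : R) * (-1) ^ ∑ i, lam i = 1 := by
    rw [← mul_pow, neg_one_mul, neg_neg, one_pow]
  change _ = jtDet h fun j : Fin K => conjugate lam j
  linear_combination key - jtDet (dualSeqZ h) lam * hsq
end

section
/- With S = ℚ[c₁,...,c_m] and σ_λ the Schur elements defined via Jacobi–Trudi determinants in the σ_p = Δ_{(1^p)}(c), the set {σ_λ : λ ⊆ m×k} is a ℚ-basis of the quotient ring S/⟨σ_{k+1}, σ_{k+2}, ..., σ_{k+m}⟩. -/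
/-!
Send `c_i` to the elementary symmetric polynomial `e_i` in `m` variables `x_1, …, x_m`; by the
fundamental theorem of symmetric polynomials this is injective. The Toeplitz determinant `σ_p`
goes to the complete homogeneous polynomial `h_p`, and the Jacobi–Trudi / bialternant identity
`det(h_{λ_i+j-i}) · a_δ = a_{λ+δ}`, with `a_α = det(x_j ^ α_i)`, describes the image of `σ_λ`.

After multiplication by `a_δ`, a generator `σ_p` with `k < p ≤ k + m` becomes the alternant of
`(p + m - 1, m - 2, …, 0)`, every monomial of which has an exponent `≥ m + k`; hence the whole
ideal lands in the polynomials with no monomial in the box `[0, m + k)^m`. For `λ ⊆ m × k` the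
exponent `λ + δ` lies in that box and `a_{λ+δ}` has coefficient `1` there, which gives linear
independence. For spanning, the Pieri rule `c_r σ_λ = ∑_{|T| = r} σ_{λ + 1_T}` shows that the span
of the `σ_λ` is stable under multiplication by every `c_r`: for `μ = λ + 1_T` either `μ ⊆ m × k`,
or `μ_{i+1} = μ_i + 1` for some `i` (two equal rows in the Jacobi–Trudi matrix, so `σ_μ = 0`), or
`μ_1 = k + 1`, and then the first Jacobi–Trudi row of `σ_μ` consists of generators of the ideal.
-/

/-- The sequence `c = (c_1, …, c_m, 0, 0, …)` of variables of `S = ℚ[c_1, …, c_m]`,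
with `c_0 = 1` and `c_i = 0` for `i < 0` or `i > m`. -/
noncomputable def cVar (m : ℕ) : ℤ → MvPolynomial (Fin m) ℚ := fun i =>
  if h : 1 ≤ i ∧ i ≤ (m : ℤ) then MvPolynomial.X ⟨(i - 1).toNat, by omega⟩
  else if i = 0 then 1 else 0

/-- `σ_p = Δ_{(1^p)}(c) = det(c_{1+j-i})_{p×p}`, extended by `σ_p = 0` for `p < 0`. -/
noncomputable def sigmaP (m : ℕ) : ℤ → MvPolynomial (Fin m) ℚ := fun p =>
  if p < 0 then 0
  else Matrix.det (Matrix.of fun i j : Fin p.toNat => cVar m (1 + (j : ℤ) - (i : ℤ)))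

/-- `σ_λ = Δ_λ(σ) = det(σ_{λ_i+j-i})`. -/
noncomputable def sigmaL (m : ℕ) {l : ℕ} (lam : Fin l → ℕ) : MvPolynomial (Fin m) ℚ :=
  Matrix.det (Matrix.of fun i j : Fin l => sigmaP m ((lam i : ℤ) + (j : ℤ) - (i : ℤ)))

open MvPolynomial Finset Matrix

namespace PowerSeries

variable {R : Type*} [CommRing R]

noncomputable def lowerToeplitz (A : R⟦X⟧) (p : ℕ) : Matrix (Fin (p + 1)) (Fin (p + 1)) R :=
  of fun i j => if j ≤ i then coeff (i - j : ℕ) A else 0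

lemma det_lowerToeplitz {A : R⟦X⟧} (hA : constantCoeff A = 1) (p : ℕ) :
    (lowerToeplitz A p).det = 1 := by
  rw [det_of_isLowerTriangular (lowerToeplitz A p) fun i j hij => if_neg (not_le.2 hij)]
  simp [lowerToeplitz, hA]

lemma lowerToeplitz_mulVec (A B : R⟦X⟧) (p : ℕ) :
    lowerToeplitz A p *ᵥ (fun i : Fin (p + 1) => coeff (i : ℕ) B) =
      fun i : Fin (p + 1) => coeff (i : ℕ) (A * B) := by
  ext i
  rw [mul_comm, coeff_mul, Finset.Nat.sum_antidiagonal_eq_sum_range_succ_mk]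
  have hrange : (range (p + 1)).filter (· ≤ (i : ℕ)) = range ((i : ℕ) + 1) := by
    ext j; simp only [mem_filter, mem_range]; omega
  simp only [mulVec, dotProduct, lowerToeplitz, of_apply, ite_mul, zero_mul, Fin.le_iff_val_le_val]
  rw [Fin.sum_univ_eq_sum_range
    (fun j => if j ≤ (i : ℕ) then coeff (i - j : ℕ) A * coeff j B else 0), ← sum_filter, hrange]
  exact sum_congr rfl fun j _ => mul_comm _ _

-- `L` is unitriangular, so `adj L = L⁻¹`; and the coefficients of `A⁻¹` solve `L x = e₀`.
theorem coeff_invOfUnit_eq_adjugate {A : R⟦X⟧} (hA : constantCoeff A = 1) (p : ℕ) :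
    coeff p (invOfUnit A 1) = (lowerToeplitz A p).adjugate (Fin.last p) 0 := by
  set L := lowerToeplitz A p
  have hsol : L *ᵥ (fun i : Fin (p + 1) => coeff (i : ℕ) (invOfUnit A 1)) = Pi.single 0 1 := by
    rw [lowerToeplitz_mulVec, mul_invOfUnit A 1 (by simp [hA])]
    ext i
    rcases eq_or_ne i 0 with rfl | hi
    · simp
    · simp [coeff_one, hi]
  have := congrArg (L.adjugate *ᵥ ·) hsol
  have hdet : L.det = 1 := det_lowerToeplitz hA p
  simp only [mulVec_mulVec, adjugate_mul, hdet, one_smul,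
    one_mulVec, mulVec_single_one] at this
  simpa using congrFun this (Fin.last p)

-- Deleting row `0` and column `p` of `lowerToeplitz A p` leaves the transpose of
-- `(e (1 + j - i))`, with the entry `(i, j)` multiplied by `(-1) ^ (i + 1 + j)`.
theorem det_toeplitz_eq_coeff_invOfUnit (e : ℤ → R) (he0 : e 0 = 1) (hneg : ∀ n < 0, e n = 0)
    (p : ℕ) :
    (of fun i j : Fin p => e (1 + j - i)).det =
      coeff p (invOfUnit (mk fun n => (-1) ^ n * e n) 1) := by
  set E : Matrix (Fin p) (Fin p) R := of fun i j => e (1 + j - i)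
  have hsq (j : ℕ) : ((-1 : R) ^ j) ^ 2 = 1 := by
    rw [← pow_mul, mul_comm, pow_mul, neg_one_sq, one_pow]
  have hsub : (lowerToeplitz (mk fun n => (-1) ^ n * e n) p).submatrix Fin.succ Fin.castSucc =
      of fun (i j : Fin p) => (-1 : R) ^ ((i : ℕ) + 1) *
        (of fun (i j : Fin p) => (-1 : R) ^ (j : ℕ) * Eᵀ i j) i j := by
    ext i j
    simp only [submatrix_apply, lowerToeplitz, of_apply, transpose_apply, E, Fin.le_iff_val_le_val,
      Fin.val_succ, Fin.val_castSucc, coeff_mk]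
    split_ifs with hji
    · obtain ⟨d, hd⟩ := Nat.exists_eq_add_of_le hji
      rw [hd, Nat.add_sub_cancel_left, show (1 : ℤ) + i - j = d by omega, pow_add]
      linear_combination -((-1 : R) ^ d * e d) * hsq j
    · rw [hneg _ (by omega), mul_zero, mul_zero]
  have hsign : (-1 : R) ^ (0 + p) * (∏ i : Fin p, (-1 : R) ^ ((i : ℕ) + 1)) *
      ∏ j : Fin p, (-1 : R) ^ (j : ℕ) = 1 := by
    rw [mul_assoc, ← prod_mul_distrib]
    simp_rw [pow_succ, mul_right_comm _ (-1 : R), ← sq, hsq, one_mul]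
    rw [prod_const, card_univ, Fintype.card_fin, zero_add, ← mul_pow, neg_one_mul, neg_neg, one_pow]
  rw [coeff_invOfUnit_eq_adjugate (by simp [he0]), adjugate_fin_succ_eq_det_submatrix,
    Fin.succAbove_zero, Fin.succAbove_last, hsub, det_mul_column, det_mul_row, det_transpose,
    ← mul_assoc, ← mul_assoc, Fin.val_zero, Fin.val_last, hsign, one_mul]

end PowerSeries

namespace MvPolynomial

section GeneratingSeries

variable {σ R : Type*} [CommRing R]

noncomputable def elemGenSeries (s : Finset σ) : PowerSeries (MvPolynomial σ R) :=
  ∏ j ∈ s, (1 - PowerSeries.C (X j) * PowerSeries.X)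

lemma coeff_elemGenSeries (s : Finset σ) (b : ℕ) :
    PowerSeries.coeff b (elemGenSeries s : PowerSeries (MvPolynomial σ R)) =
      (-1) ^ b * ∑ T ∈ powersetCard b s, ∏ j ∈ T, X j := by
  have hT (T : Finset σ) : ∏ j ∈ T, -(PowerSeries.C (X j : MvPolynomial σ R) * PowerSeries.X) =
      PowerSeries.C ((-1) ^ #T * ∏ j ∈ T, X j) * PowerSeries.X ^ #T := by
    rw [prod_neg, prod_mul_distrib, prod_const, map_mul, map_prod, map_pow, map_neg, map_one]
    ring
  simp_rw [elemGenSeries, sub_eq_add_neg, prod_one_add, hT, map_sum, PowerSeries.coeff_C_mul_X_pow,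
    powersetCard_eq_filter, sum_filter, mul_sum]
  exact sum_congr rfl fun T _ => by rcases eq_or_ne #T b with rfl | h <;> simp [*, Ne.symm]

lemma constantCoeff_elemGenSeries (s : Finset σ) :
    PowerSeries.constantCoeff (elemGenSeries s : PowerSeries (MvPolynomial σ R)) = 1 := by
  simp [← PowerSeries.coeff_zero_eq_constantCoeff_apply, coeff_elemGenSeries]

variable (σ R) [Fintype σ]

noncomputable def completeGenSeries : PowerSeries (MvPolynomial σ R) :=
  PowerSeries.invOfUnit (elemGenSeries univ) 1

lemma elemGenSeries_mul_completeGenSeries :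
    elemGenSeries univ * completeGenSeries σ R = 1 :=
  PowerSeries.mul_invOfUnit _ _ (by simp [constantCoeff_elemGenSeries])

noncomputable def esymmInt (j : ℤ) : MvPolynomial σ R :=
  if 0 ≤ j then esymm σ R j.toNat else 0

-- The complete homogeneous symmetric polynomial `h_j`, extended by `0` to `j < 0`.
noncomputable def completeInt (j : ℤ) : MvPolynomial σ R :=
  if 0 ≤ j then PowerSeries.coeff j.toNat (completeGenSeries σ R) else 0

lemma completeInt_zero : completeInt σ R 0 = 1 := by
  simp [completeInt, completeGenSeries]

lemma completeInt_of_neg {j : ℤ} (hj : j < 0) : completeInt σ R j = 0 := by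
  simp [completeInt, not_le.2 hj]

theorem det_toeplitz_esymmInt (p : ℕ) :
    (of fun i j : Fin p => esymmInt σ R (1 + j - i)).det = completeInt σ R p := by
  have hE : PowerSeries.mk (fun n => (-1) ^ n * esymmInt σ R n) = elemGenSeries univ := by
    ext b
    simp [coeff_elemGenSeries, esymmInt, esymm]
  rw [PowerSeries.det_toeplitz_eq_coeff_invOfUnit _ (by simp [esymmInt])
    (fun n hn => by simp [esymmInt, not_le.2 hn]), hE]
  simp [completeInt, completeGenSeries]

end GeneratingSeries

section BoxAvoiding

variable (σ R : Type*) [CommSemiring R]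

def boxAvoidingIdeal (N : ℕ) : Ideal (MvPolynomial σ R) where
  carrier := {f | ∀ u : σ →₀ ℕ, (∀ i, u i < N) → coeff u f = 0}
  add_mem' hf hg u hu := by rw [coeff_add, hf u hu, hg u hu, add_zero]
  zero_mem' u _ := coeff_zero u
  smul_mem' c f hf u hu := by
    classical
    rw [smul_eq_mul, coeff_mul]
    refine sum_eq_zero fun x hx => ?_
    rw [HasAntidiagonal.mem_antidiagonal] at hx
    rw [hf x.2 fun i => ?_, mul_zero]
    have := hu i
    rw [← hx, Finsupp.add_apply] at this
    omega

end BoxAvoiding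

section Alternant

variable {R : Type*} [CommRing R] {n : ℕ}

noncomputable def alternant (α : Fin n → ℕ) : MvPolynomial (Fin n) R :=
  (of fun i l : Fin n => X l ^ α i).det

def staircase (n : ℕ) : Fin n → ℕ := fun i => n - 1 - i

lemma completeGenSeries_mul_elemGenSeries_erase (l : Fin n) :
    completeGenSeries (Fin n) R * elemGenSeries (univ.erase l) =
      PowerSeries.mk fun a => X l ^ a := by
  have hgeom : PowerSeries.mk (fun a => (X l : MvPolynomial (Fin n) R) ^ a) *
      (1 - PowerSeries.C (X l) * PowerSeries.X) = 1 := by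
    simpa [PowerSeries.rescale_mk, PowerSeries.rescale_X] using
      congrArg (PowerSeries.rescale (X l))
        (PowerSeries.mk_one_mul_one_sub_eq_one (MvPolynomial (Fin n) R))
  calc completeGenSeries (Fin n) R * elemGenSeries (univ.erase l)
      = completeGenSeries (Fin n) R * elemGenSeries (univ.erase l) *
          (PowerSeries.mk (fun a => X l ^ a) * (1 - PowerSeries.C (X l) * PowerSeries.X)) := by
        rw [hgeom, mul_one]
    _ = (elemGenSeries univ * completeGenSeries (Fin n) R) * PowerSeries.mk (fun a => X l ^ a) := by
        rw [elemGenSeries, elemGenSeries, ← prod_erase_mul _ _ (mem_univ l)]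
        ring
    _ = PowerSeries.mk fun a => X l ^ a := by
        rw [elemGenSeries_mul_completeGenSeries, one_mul]

lemma sum_completeInt_mul_coeff_elemGenSeries_erase (l : Fin n) (a : ℕ) :
    ∑ b ∈ range n, completeInt (Fin n) R (a - b) *
      PowerSeries.coeff b (elemGenSeries (univ.erase l)) = X l ^ a := by
  have hE (b : ℕ) (hb : b ≥ n) :
      PowerSeries.coeff b (elemGenSeries (univ.erase l) : PowerSeries (MvPolynomial _ R)) = 0 := by
    rw [coeff_elemGenSeries, powersetCard_eq_empty.2, sum_empty, mul_zero]
    rw [card_erase_of_mem (mem_univ l), card_univ, Fintype.card_fin]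
    have := l.pos
    omega
  have hH (b : ℕ) (hb : b ≥ a + 1) : completeInt (Fin n) R (a - b) = 0 :=
    completeInt_of_neg _ _ (by omega)
  rw [← eventually_constant_sum (fun b hb => by rw [hE b hb, mul_zero]) (le_add_right le_rfl :
      n ≤ n + (a + 1)), add_comm,
    eventually_constant_sum (fun b hb => by rw [hH b hb, zero_mul]) (le_add_right le_rfl),
    ← PowerSeries.coeff_mk a (fun a => (X l : MvPolynomial (Fin n) R) ^ a),
    ← completeGenSeries_mul_elemGenSeries_erase, mul_comm, PowerSeries.coeff_mul,
    Finset.Nat.sum_antidiagonal_eq_sum_range_succ_mk]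
  refine sum_congr rfl fun b hb => ?_
  rw [mem_range] at hb
  rw [mul_comm, completeInt, if_pos (by omega), show ((a : ℤ) - b).toNat = a - b by omega]

-- Entry `(i, l)` is the coefficient of `t ^ (λ_i + n - 1 - i)` in
-- `H(t) ∏_{j ≠ l} (1 - x_j t) = 1 / (1 - x_l t)`.
lemma of_completeInt_mul_of_coeff_elemGenSeries (lam : Fin n → ℕ) :
    (of fun i j : Fin n => completeInt (Fin n) R (lam i + j - i)) *
        (of fun j l : Fin n => PowerSeries.coeff (n - 1 - j) (elemGenSeries (univ.erase l))) =
      of fun i l => X l ^ (lam + staircase n) i := by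
  refine Matrix.ext fun i l => ?_
  rw [mul_apply, ← Equiv.sum_comp (Fin.revPerm : Equiv.Perm (Fin n))]
  simp only [of_apply, Pi.add_apply, staircase]
  rw [← sum_completeInt_mul_coeff_elemGenSeries_erase l, ← Fin.sum_univ_eq_sum_range]
  refine sum_congr rfl fun b _ => ?_
  have hi := i.isLt
  have hb := b.isLt
  simp only [Fin.revPerm_apply, Fin.val_rev]
  congr 2
  · omega
  · congr 1
    omega

theorem det_completeInt_mul_alternant_staircase (lam : Fin n → ℕ) :
    (of fun i j : Fin n => completeInt (Fin n) R (lam i + j - i)).det *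
      alternant (staircase n) = alternant (lam + staircase n) := by
  have htri : (of fun i j : Fin n =>
      completeInt (Fin n) R ((0 : Fin n → ℕ) i + j - i)).IsUpperTriangular :=
    fun i j hij => completeInt_of_neg _ _ (by simpa using hij)
  have hdelta := congrArg det (of_completeInt_mul_of_coeff_elemGenSeries (R := R) (0 : Fin n → ℕ))
  rw [det_mul, det_of_isUpperTriangular htri, zero_add] at hdelta
  simp only [of_apply, Pi.zero_apply, Nat.cast_zero, zero_add, sub_self, completeInt_zero,
    prod_const_one, one_mul] at hdelta
  rw [alternant, alternant, ← hdelta, ← det_mul, of_completeInt_mul_of_coeff_elemGenSeries]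

lemma alternant_eq_sum (α : Fin n → ℕ) :
    (alternant α : MvPolynomial (Fin n) R) = ∑ w : Equiv.Perm (Fin n),
      Equiv.Perm.sign w • monomial (Finsupp.equivFunOnFinite.symm (α ∘ w)) 1 := by
  refine (det_apply _).trans (sum_congr rfl fun w _ => ?_)
  rw [monomial_eq, C_1, one_mul, Finsupp.prod_fintype _ _ fun i => pow_zero _]
  rfl

lemma coeff_alternant (α : Fin n → ℕ) (u : Fin n →₀ ℕ) :
    coeff u (alternant α : MvPolynomial (Fin n) R) = ∑ w : Equiv.Perm (Fin n),
      Equiv.Perm.sign w • if Finsupp.equivFunOnFinite.symm (α ∘ w) = u then (1 : R) else 0 := by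
  simp only [alternant_eq_sum, coeff_sum, coeff_smul, coeff_monomial]

lemma perm_eq_one_of_comp_eq_of_strictAnti {α β : Fin n → ℕ} (hα : StrictAnti α) (hβ : StrictAnti β)
    {w : Equiv.Perm (Fin n)} (h : α ∘ w = β) : w = 1 := by
  have hw : StrictMono w := fun i j hij => by
    have := hβ hij
    rw [← h] at this
    exact hα.lt_iff_gt.1 this
  exact Equiv.ext fun i => congrFun ((hw.range_inj strictMono_id).1
    (by rw [Set.range_id, w.surjective.range_eq])) i

theorem coeff_alternant_of_strictAnti {α β : Fin n → ℕ} (hα : StrictAnti α) (hβ : StrictAnti β) :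
    coeff (Finsupp.equivFunOnFinite.symm β) (alternant α : MvPolynomial (Fin n) R) =
      if α = β then 1 else 0 := by
  rw [coeff_alternant, sum_eq_single 1 (fun w _ hw => ?_) (by simp)]
  · simp
  · rw [if_neg, smul_zero]
    rw [Equiv.apply_eq_iff_eq]
    exact fun h => hw (perm_eq_one_of_comp_eq_of_strictAnti hα hβ h)

lemma alternant_mem_boxAvoidingIdeal {N : ℕ} {α : Fin n → ℕ} {i : Fin n} (h : N ≤ α i) :
    alternant α ∈ boxAvoidingIdeal (Fin n) R N := fun u hu => by
  rw [coeff_alternant]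
  refine sum_eq_zero fun w _ => ?_
  rw [if_neg, smul_zero]
  rintro rfl
  have := hu (w.symm i)
  simp only [Finsupp.coe_equivFunOnFinite_symm, Function.comp_apply,
    Equiv.apply_symm_apply] at this
  omega

lemma strictAnti_add_staircase {lam : Fin n → ℕ} (h : Antitone lam) :
    StrictAnti (lam + staircase n) := fun i j hij => by
  have := h hij.le
  simp only [Pi.add_apply, staircase]
  omega

lemma alternant_staircase_ne_zero [Nontrivial R] :
    (alternant (staircase n) : MvPolynomial (Fin n) R) ≠ 0 := fun h => by
  have hanti : StrictAnti (staircase n) := by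
    simpa using strictAnti_add_staircase (fun _ _ _ => le_rfl : Antitone (0 : Fin n → ℕ))
  simpa [h] using coeff_alternant_of_strictAnti (R := R) hanti hanti

def addVerticalStrip {ι : Type*} [DecidableEq ι] (T : Finset ι) (α : ι → ℕ) : ι → ℕ :=
  fun i => α i + if i ∈ T then 1 else 0

lemma antitone_addVerticalStrip_or {lam : Fin n → ℕ} (hlam : Antitone lam) (T : Finset (Fin n)) :
    Antitone (addVerticalStrip T lam) ∨ ∃ i j : Fin n, (j : ℕ) = i + 1 ∧
      addVerticalStrip T lam j = addVerticalStrip T lam i + 1 := by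
  rcases n with _ | n
  · exact Or.inl fun i => i.elim0
  rw [Fin.antitone_iff_succ_le]
  refine or_iff_not_imp_left.2 fun h => ?_
  obtain ⟨i, hi⟩ := not_forall.1 h
  refine ⟨i.castSucc, i.succ, by simp, ?_⟩
  have := hlam (show i.castSucc ≤ i.succ from Fin.castSucc_lt_succ.le)
  simp only [addVerticalStrip] at hi ⊢
  split_ifs at hi ⊢ <;> omega

theorem esymm_mul_alternant (r : ℕ) (α : Fin n → ℕ) :
    esymm (Fin n) R r * alternant α =
      ∑ T ∈ powersetCard r univ, alternant (addVerticalStrip T α) := by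
  have hmul (T : Finset (Fin n)) (w : Equiv.Perm (Fin n)) :
      (∏ i ∈ T, X i) * ∏ i, (X i : MvPolynomial (Fin n) R) ^ α (w i) =
        ∏ i, X i ^ (α (w i) + if i ∈ T then 1 else 0) := by
    simp_rw [pow_add, prod_mul_distrib, pow_ite, pow_one, pow_zero, prod_ite_mem, univ_inter,
      mul_comm]
  have hperm (w : Equiv.Perm (Fin n)) : powersetCard r univ =
      (powersetCard r univ).map (mapEmbedding w.toEmbedding).toEmbedding := by
    rw [← powersetCard_map, map_univ_equiv]
  simp only [alternant, det_apply, of_apply, esymm, sum_mul, mul_sum, mul_smul_comm, hmul]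
  rw [sum_comm]
  refine sum_congr rfl fun w _ => ?_
  rw [← smul_sum]
  conv_rhs => rw [hperm w, sum_map]
  simp [addVerticalStrip, mapEmbedding_apply]

end Alternant

end MvPolynomial

section Schur

variable (m : ℕ)

noncomputable def esymmHom : MvPolynomial (Fin m) ℚ →ₐ[ℚ] MvPolynomial (Fin m) ℚ :=
  aeval fun i => esymm (Fin m) ℚ (i + 1)

lemma esymmHom_injective : Function.Injective (esymmHom m) := fun a b h =>
  esymmAlgHom_fin_injective ℚ le_rfl (Subtype.ext (by simpa [esymmAlgHom_apply, esymmHom] using h))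

lemma esymmHom_X (v : Fin m) : esymmHom m (X v) = esymm (Fin m) ℚ (v + 1) := aeval_X _ _

lemma esymmHom_cVar (j : ℤ) : esymmHom m (cVar m j) = esymmInt (Fin m) ℚ j := by
  rcases lt_trichotomy j 0 with hj | rfl | hj
  · rw [cVar, dif_neg (by omega), if_neg hj.ne, map_zero, esymmInt, if_neg hj.not_ge]
  · simp [cVar, esymmInt, esymm_zero]
  · rw [esymmInt, if_pos hj.le]
    by_cases hjm : j ≤ m
    · rw [cVar, dif_pos ⟨hj, hjm⟩, esymmHom_X]
      congr 1
      show (j - 1).toNat + 1 = j.toNat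
      omega
    · have hcard : #(univ : Finset (Fin m)) < j.toNat := by
        rw [card_univ, Fintype.card_fin]
        omega
      rw [cVar, dif_neg (by omega), if_neg hj.ne', map_zero, esymm, powersetCard_eq_empty.2 hcard,
        sum_empty]

lemma esymmHom_sigmaP (p : ℤ) : esymmHom m (sigmaP m p) = completeInt (Fin m) ℚ p := by
  unfold sigmaP
  split_ifs with hp
  · rw [map_zero, completeInt_of_neg _ _ hp]
  · rw [AlgHom.map_det]
    convert det_toeplitz_esymmInt (Fin m) ℚ p.toNat using 2
    · ext i j
      simp [esymmHom_cVar]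
    · omega

theorem esymmHom_sigmaL_mul_alternant (lam : Fin m → ℕ) :
    esymmHom m (sigmaL m lam) * alternant (staircase m) = alternant (lam + staircase m) := by
  rw [sigmaL, AlgHom.map_det, ← det_completeInt_mul_alternant_staircase]
  congr 2
  ext i j
  simp [esymmHom_sigmaP]

theorem X_mul_sigmaL (v : Fin m) (lam : Fin m → ℕ) :
    X v * sigmaL m lam = ∑ T ∈ powersetCard (v + 1) univ, sigmaL m (addVerticalStrip T lam) := by
  apply esymmHom_injective m
  apply mul_right_cancel₀ alternant_staircase_ne_zero
  rw [map_mul, map_sum, sum_mul, mul_assoc, esymmHom_sigmaL_mul_alternant, esymmHom_X,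
    esymm_mul_alternant]
  refine sum_congr rfl fun T _ => ?_
  rw [esymmHom_sigmaL_mul_alternant]
  congr 1
  ext i
  simp only [addVerticalStrip, Pi.add_apply]
  ring

theorem coeff_esymmHom_sigmaL_mul_alternant {lam mu : Fin m → ℕ} (hlam : Antitone lam)
    (hmu : Antitone mu) :
    coeff (Finsupp.equivFunOnFinite.symm (mu + staircase m))
      (esymmHom m (sigmaL m lam) * alternant (staircase m)) = if lam = mu then 1 else 0 := by
  rw [esymmHom_sigmaL_mul_alternant, coeff_alternant_of_strictAnti (strictAnti_add_staircase hlam)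
    (strictAnti_add_staircase hmu)]
  simp

lemma sigmaL_eq_prod_of_tail_eq_zero {lam : Fin m → ℕ} (h : ∀ i : Fin m, (i : ℕ) ≠ 0 → lam i = 0) :
    sigmaL m lam = ∏ i, sigmaP m (lam i) := by
  have htri : (of fun i j : Fin m => sigmaP m ((lam i : ℤ) + j - i)).IsUpperTriangular :=
    fun i j hji => by
      have : (j : ℕ) < i := hji
      rw [of_apply, h i (by omega), sigmaP, if_pos (by omega)]
  rw [sigmaL, det_of_isUpperTriangular htri]
  simp

lemma sigmaP_zero : sigmaP m 0 = 1 := by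
  simp [sigmaP]

lemma sigmaL_zero : sigmaL m (0 : Fin m → ℕ) = 1 := by
  rw [sigmaL_eq_prod_of_tail_eq_zero m (lam := 0) fun _ _ => rfl]
  simp [sigmaP_zero]

lemma sigmaL_eq_zero_of_succ_eq {lam : Fin m → ℕ} {i j : Fin m} (hij : (j : ℕ) = i + 1)
    (h : lam j = lam i + 1) : sigmaL m lam = 0 :=
  det_zero_of_row_eq (i := i) (j := j) (fun hc => by simp [hc] at hij) <| funext fun c => by
    simp only [of_apply, h, hij]
    congr 1
    push_cast
    ring

end Schur

section Basis

variable (m k : ℕ)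

noncomputable def sigmaIdeal : Ideal (MvPolynomial (Fin m) ℚ) :=
  Ideal.span (sigmaP m '' Set.Icc ((k : ℤ) + 1) ((k : ℤ) + m))

lemma sigmaL_mem_sigmaIdeal {lam : Fin m → ℕ} {i₀ : Fin m} (h₀ : (i₀ : ℕ) = 0)
    (h : lam i₀ = k + 1) : sigmaL m lam ∈ sigmaIdeal m k := by
  rw [← Ideal.Quotient.eq_zero_iff_mem, sigmaL, RingHom.map_det]
  refine det_eq_zero_of_row_eq_zero i₀ fun j => Ideal.Quotient.eq_zero_iff_mem.2 ?_
  refine Ideal.subset_span ⟨_, ⟨?_, ?_⟩, rfl⟩ <;> have := j.isLt <;> omega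

theorem esymmHom_mul_alternant_mem_boxAvoidingIdeal {x : MvPolynomial (Fin m) ℚ}
    (hx : x ∈ sigmaIdeal m k) :
    esymmHom m x * alternant (staircase m) ∈ boxAvoidingIdeal (Fin m) ℚ (m + k) := by
  suffices sigmaIdeal m k ≤
      ((boxAvoidingIdeal (Fin m) ℚ (m + k)).colon {alternant (staircase m)}).comap (esymmHom m) by
    simpa [Submodule.mem_colon_singleton] using this hx
  refine Ideal.span_le.2 ?_
  rintro _ ⟨p, ⟨hp₁, hp₂⟩, rfl⟩
  have hm : 0 < m := by omega
  set i₀ : Fin m := ⟨0, hm⟩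
  -- `σ_p` is `σ_λ` for the one-row `λ = (p)`, and `(p) + δ` has first entry `p + m - 1 ≥ m + k`.
  have hrow : sigmaP m p = sigmaL m (Pi.single i₀ p.toNat) := by
    rw [sigmaL_eq_prod_of_tail_eq_zero m fun i hi => Pi.single_eq_of_ne (by grind) _,
      Fintype.prod_eq_single i₀ fun i hi => by simp [hi, sigmaP_zero]]
    simp only [Pi.single_eq_same]
    congr
    omega
  rw [SetLike.mem_coe, Ideal.mem_comap, Submodule.mem_colon_singleton, smul_eq_mul, hrow,
    esymmHom_sigmaL_mul_alternant]
  refine alternant_mem_boxAvoidingIdeal (i := i₀) ?_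
  simp only [Pi.add_apply, Pi.single_eq_same, staircase, tsub_zero, i₀]
  omega

abbrev BoxPartition := {lam : Fin m → ℕ // Antitone lam ∧ ∀ i, lam i ≤ k}

theorem linearIndependent_mk_sigmaL :
    LinearIndependent ℚ fun lam : BoxPartition m k =>
      Ideal.Quotient.mk (sigmaIdeal m k) (sigmaL m lam.1) := by
  rw [linearIndependent_iff']
  intro s g hg mu hmu
  have hx : ∑ lam ∈ s, g lam • sigmaL m lam.1 ∈ sigmaIdeal m k := by
    rw [← Ideal.Quotient.eq_zero_iff_mem, ← Ideal.Quotient.mkₐ_eq_mk ℚ, map_sum]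
    simpa using hg
  have hcoeff := esymmHom_mul_alternant_mem_boxAvoidingIdeal m k hx
    (Finsupp.equivFunOnFinite.symm (mu.1 + staircase m)) fun l => by
      have := mu.2.2 l
      have := l.isLt
      simp only [Finsupp.coe_equivFunOnFinite_symm, Pi.add_apply, staircase]
      omega
  simp only [map_sum, map_smul, sum_mul, smul_mul_assoc, coeff_sum, coeff_smul, smul_eq_mul]
    at hcoeff
  rw [sum_congr rfl fun lam _ =>
    congrArg (g lam * ·) (coeff_esymmHom_sigmaL_mul_alternant m lam.2.1 mu.2.1)] at hcoeff
  simpa [← Subtype.ext_iff, hmu] using hcoeff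

lemma mk_sigmaL_addVerticalStrip_mem_span (lam : BoxPartition m k) (T : Finset (Fin m)) :
    Ideal.Quotient.mk (sigmaIdeal m k) (sigmaL m (addVerticalStrip T lam.1)) ∈
      Submodule.span ℚ (Set.range fun lam : BoxPartition m k =>
        Ideal.Quotient.mk (sigmaIdeal m k) (sigmaL m lam.1)) := by
  have hmu_le (i : Fin m) : addVerticalStrip T lam.1 i ≤ k + 1 := by
    have := lam.2.2 i
    simp only [addVerticalStrip]
    split_ifs <;> omega
  have hcases := antitone_addVerticalStrip_or lam.2.1 T
  generalize addVerticalStrip T lam.1 = mu at hmu_le hcases ⊢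
  rcases hcases with hanti | ⟨i, j, hij, hmu⟩
  · by_cases hbox : ∀ i, mu i ≤ k
    · exact Submodule.subset_span ⟨⟨mu, hanti, hbox⟩, rfl⟩
    obtain ⟨i, hi⟩ := not_forall.1 hbox
    have h₀ : mu ⟨0, i.pos⟩ = k + 1 := by
      have := hanti (show (⟨0, i.pos⟩ : Fin m) ≤ i from Nat.zero_le (i : ℕ))
      have := hmu_le ⟨0, i.pos⟩
      omega
    rw [Ideal.Quotient.eq_zero_iff_mem.2 (sigmaL_mem_sigmaIdeal m k rfl h₀)]
    exact zero_mem _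
  · rw [sigmaL_eq_zero_of_succ_eq m hij hmu, map_zero]
    exact zero_mem _

theorem span_range_mk_sigmaL_eq_top :
    Submodule.span ℚ (Set.range fun lam : BoxPartition m k =>
      Ideal.Quotient.mk (sigmaIdeal m k) (sigmaL m lam.1)) = ⊤ := by
  set V := Submodule.span ℚ (Set.range fun lam : BoxPartition m k =>
    Ideal.Quotient.mk (sigmaIdeal m k) (sigmaL m lam.1))
  have hmulX (v : Fin m) : V ≤ V.comap (LinearMap.mulRight ℚ (Ideal.Quotient.mk _ (X v))) := by
    refine Submodule.span_le.2 ?_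
    rintro _ ⟨lam, rfl⟩
    rw [SetLike.mem_coe, Submodule.mem_comap, LinearMap.mulRight_apply, ← map_mul, mul_comm,
      X_mul_sigmaL, map_sum]
    exact Submodule.sum_mem _ fun T _ => mk_sigmaL_addVerticalStrip_mem_span m k lam T
  rw [eq_top_iff]
  rintro y -
  obtain ⟨f, rfl⟩ := Ideal.Quotient.mk_surjective y
  induction f using MvPolynomial.induction_on with
  | C a =>
    rw [← mul_one (C a), ← smul_eq_C_mul, ← Ideal.Quotient.mkₐ_eq_mk ℚ, map_smul,
      Ideal.Quotient.mkₐ_eq_mk, ← sigmaL_zero m]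
    exact V.smul_mem a
      (Submodule.subset_span ⟨⟨0, fun _ _ _ => le_rfl, fun _ => Nat.zero_le _⟩, rfl⟩)
  | add p q hp hq =>
    rw [map_add]
    exact V.add_mem hp hq
  | mul_X p v hp =>
    rw [map_mul]
    exact hmulX v hp

end Basis

theorem sigmaL_basis_of_quotient_general (m k : ℕ) :
    LinearIndependent ℚ
      (fun lam : {lam : Fin m → ℕ //
          (∀ i j : Fin m, i ≤ j → lam j ≤ lam i) ∧ ∀ i, lam i ≤ k} =>
        Ideal.Quotient.mk
          (Ideal.span ((fun p : ℤ => sigmaP m p) '' Set.Icc ((k : ℤ) + 1) ((k : ℤ) + m)))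
          (sigmaL m lam.1)) ∧
    Submodule.span ℚ
      (Set.range fun lam : {lam : Fin m → ℕ //
          (∀ i j : Fin m, i ≤ j → lam j ≤ lam i) ∧ ∀ i, lam i ≤ k} =>
        Ideal.Quotient.mk
          (Ideal.span ((fun p : ℤ => sigmaP m p) '' Set.Icc ((k : ℤ) + 1) ((k : ℤ) + m)))
          (sigmaL m lam.1)) = ⊤ :=
  ⟨linearIndependent_mk_sigmaL m k, span_range_mk_sigmaL_eq_top m k⟩

/-- The images of the `σ_λ` with `λ ⊆ m × k` form a `ℚ`-basis of the quotient
ring `S/⟨σ_{k+1}, …, σ_{k+m}⟩`. -/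
theorem sigmaL_basis_of_quotient (m k : ℕ) (hm : 0 < m) (hk : 0 < k) :
    LinearIndependent ℚ
      (fun lam : {lam : Fin m → ℕ //
          (∀ i j : Fin m, i ≤ j → lam j ≤ lam i) ∧ ∀ i, lam i ≤ k} =>
        Ideal.Quotient.mk
          (Ideal.span ((fun p : ℤ => sigmaP m p) '' Set.Icc ((k : ℤ) + 1) ((k : ℤ) + m)))
          (sigmaL m lam.1)) ∧
    Submodule.span ℚ
      (Set.range fun lam : {lam : Fin m → ℕ //
          (∀ i j : Fin m, i ≤ j → lam j ≤ lam i) ∧ ∀ i, lam i ≤ k} =>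
        Ideal.Quotient.mk
          (Ideal.span ((fun p : ℤ => sigmaP m p) '' Set.Icc ((k : ℤ) + 1) ((k : ℤ) + m)))
          (sigmaL m lam.1)) = ⊤ :=
  sigmaL_basis_of_quotient_general m k
end

section
/- In QH_α, the relation c_m^n = (α q)^m holds, where n = m + k. -/
/-- The deformed quantum ring `QH_α = S[q]/⟨σ_{k+1}, …, σ_{n-1}, σ_n + (-1)^m α q⟩`
is the quotient of `Polynomial (MvPolynomial (Fin m) ℚ)` by this ideal. -/
noncomputable def qhIdeal (m k : ℕ) (α : ℚ) :
    Ideal (Polynomial (MvPolynomial (Fin m) ℚ)) :=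
  Ideal.span
    ((fun p : ℤ => Polynomial.C (sigmaP m p)) '' Set.Icc ((k : ℤ) + 1) ((m : ℤ) + k - 1) ∪
      {Polynomial.C (sigmaP m ((m : ℤ) + k)) +
        (-1) ^ m * Polynomial.C (MvPolynomial.C α) * Polynomial.X})

/-!
Let `D_n` be the `m × m` matrix `(σ_{n+j-i})`. Expanding the Hessenberg determinant `σ_p` along
its first column gives `σ_p = ∑_{t<m} (-1)^t c_{t+1} σ_{p-1-t}` for `p ≥ 1`, i.e.
`D_{n+1} = D_n A` for a companion matrix `A` of determinant `c_m`; since `D_0` is unitriangular,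
`det D_n = c_m^n`. In `QH_α` the entries of `D_{m+k}` below the diagonal are among
`σ_{k+1}, …, σ_{n-1}`, hence vanish, and its diagonal entries are `σ_n = (-1)^(m+1) α q`, so
`c_m^n = ((-1)^(m+1) α q)^m = (α q)^m`.
-/

open Matrix Finset

theorem sum_range_eq_sum_range_of_vanish {M : Type*} [AddCommMonoid M] {f : ℕ → M} {a b : ℕ}
    (ha : ∀ t, a ≤ t → f t = 0) (hb : ∀ t, b ≤ t → f t = 0) :
    ∑ t ∈ range a, f t = ∑ t ∈ range b, f t := by
  wlog hab : a ≤ b generalizing a b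
  · exact (this hb ha (by omega)).symm
  exact sum_subset (range_subset_range.2 hab) fun t _ ht => ha t (by simpa using ht)

section Toeplitz

variable {R : Type*} [CommRing R] (c : ℤ → R)

noncomputable def toeplitzDet (p : ℤ) : R :=
  if p < 0 then 0 else det (of fun i j : Fin p.toNat => c (1 + (j : ℤ) - (i : ℤ)))

/-- Freeing the first row makes the expansion of `toeplitzDet` along the first column inductive. -/
noncomputable def toeplitzDetShift (s : ℤ) (r : ℕ) : R :=
  det (of fun i j : Fin r => if (i : ℕ) = 0 then c (s + j) else c (1 + (j : ℤ) - (i : ℤ)))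

variable {c}

theorem toeplitzDet_of_neg {p : ℤ} (hp : p < 0) : toeplitzDet c p = 0 := if_pos hp

theorem toeplitzDet_zero : toeplitzDet c 0 = 1 := by simp [toeplitzDet]

theorem toeplitzDetShift_one_left (r : ℕ) : toeplitzDetShift c 1 r = toeplitzDet c r := by
  rw [toeplitzDet, if_neg (by omega), toeplitzDetShift, Int.toNat_natCast]
  congr 1
  ext i j
  by_cases hi : (i : ℕ) = 0 <;> simp [hi]

theorem toeplitzDetShift_one_right (s : ℤ) : toeplitzDetShift c s 1 = c s := by
  simp [toeplitzDetShift]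

theorem toeplitzDetShift_add_two (h0 : c 0 = 1) (hneg : ∀ i < 0, c i = 0) (s : ℤ) (r : ℕ) :
    toeplitzDetShift c s (r + 2) =
      c s * toeplitzDet c (r + 1) - toeplitzDetShift c (s + 1) (r + 1) := by
  set A : Matrix (Fin (r + 2)) (Fin (r + 2)) R :=
    of fun i j => if (i : ℕ) = 0 then c (s + j) else c (1 + (j : ℤ) - (i : ℤ))
  have minor_zero : det (A.submatrix (Fin.succAbove 0) Fin.succ) = toeplitzDet c (r + 1) := by
    rw [← Nat.cast_succ, ← toeplitzDetShift_one_left, toeplitzDetShift]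
    congr 1
    ext i j
    rcases eq_or_ne i 0 with rfl | hi <;> simp [A, *] <;> ring_nf
  have minor_one : det (A.submatrix (Fin.succAbove 1) Fin.succ) =
      toeplitzDetShift c (s + 1) (r + 1) := by
    rw [toeplitzDetShift]
    congr 1
    ext i j
    cases i using Fin.cases with
    | zero => simp [A]; ring_nf
    | succ i => simp [A]; ring_nf
  have col_zero_tail (i : Fin r) : A i.succ.succ 0 = 0 := hneg _ (by simp; omega)
  have entry_zero : A 0 0 = c s := by simp [A]
  have entry_one : A 1 0 = 1 := by simp [A, h0]
  change det A = _
  rw [det_succ_column_zero, Fin.sum_univ_succ, Fin.sum_univ_succ, Fin.succ_zero_eq_one,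
    minor_zero, minor_one, entry_zero, entry_one]
  simp only [col_zero_tail, mul_zero, zero_mul, sum_const_zero, Fin.val_zero, Fin.val_one]
  ring

theorem toeplitzDetShift_eq_sum (h0 : c 0 = 1) (hneg : ∀ i < 0, c i = 0) (r : ℕ) (s : ℤ) :
    toeplitzDetShift c s (r + 1) =
      ∑ t ∈ range (r + 1), (-1) ^ t * c (s + t) * toeplitzDet c (r - t) := by
  induction r generalizing s with
  | zero => simp [toeplitzDetShift_one_right, toeplitzDet_zero]
  | succ r ih =>
    rw [toeplitzDetShift_add_two h0 hneg, ih, sum_range_succ' _ (r + 1), sub_eq_neg_add,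
      ← sum_neg_distrib]
    simp only [Nat.cast_zero, add_zero, sub_zero, pow_zero, one_mul, Nat.cast_succ]
    congr 1
    refine sum_congr rfl fun t _ => ?_
    rw [pow_succ]
    ring_nf

theorem toeplitzDet_eq_sum {m : ℕ} (h0 : c 0 = 1) (hneg : ∀ i < 0, c i = 0)
    (htop : ∀ i, (m : ℤ) < i → c i = 0) {p : ℤ} (hp : 0 < p) :
    toeplitzDet c p = ∑ t ∈ range m, (-1) ^ t * c (1 + t) * toeplitzDet c (p - 1 - t) := by
  obtain ⟨r, rfl⟩ : ∃ r : ℕ, p = r + 1 := ⟨(p - 1).toNat, by omega⟩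
  rw [← Nat.cast_succ, ← toeplitzDetShift_one_left, toeplitzDetShift_eq_sum h0 hneg]
  push_cast
  simp only [add_sub_cancel_right]
  refine sum_range_eq_sum_range_of_vanish (fun t ht => ?_) (fun t ht => ?_)
  · rw [toeplitzDet_of_neg (by omega), mul_zero]
  · rw [htop _ (by omega), mul_zero, zero_mul]

variable (c) in
/-- For `c = cVar m` its determinant is `σ_λ` for the rectangular partition `λ = (n^m)`. -/
noncomputable def jacobiTrudiRect (m n : ℕ) : Matrix (Fin m) (Fin m) R :=
  of fun i j => toeplitzDet c (n + j - i)

variable (c) in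
noncomputable def companion (m : ℕ) : Matrix (Fin m) (Fin m) R :=
  of fun i j => if (j : ℕ) + 1 = m then (-1) ^ (m - 1 - (i : ℕ)) * c (m - i)
    else if (i : ℕ) = j + 1 then 1 else 0

theorem jacobiTrudiRect_succ {m : ℕ} (h0 : c 0 = 1) (hneg : ∀ i < 0, c i = 0)
    (htop : ∀ i, (m : ℤ) < i → c i = 0) (n : ℕ) :
    jacobiTrudiRect c m (n + 1) = jacobiTrudiRect c m n * companion c m := by
  ext i j
  rw [mul_apply]
  by_cases hj : (j : ℕ) + 1 = m
  · simp only [jacobiTrudiRect, companion, of_apply, if_pos hj]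
    rw [toeplitzDet_eq_sum h0 hneg htop (by omega), Fin.sum_univ_eq_sum_range
      (fun l => toeplitzDet c (n + l - i) * ((-1) ^ (m - 1 - l) * c (m - l))), ← sum_range_reflect]
    refine sum_congr rfl fun t ht => ?_
    have ht : t < m := mem_range.1 ht
    have hj' : (j : ℤ) = m - 1 := by omega
    push_cast [hj', Nat.cast_sub (by omega : t ≤ m - 1), Nat.cast_sub (by omega : 1 ≤ m)]
    ring_nf
  · simp only [jacobiTrudiRect, companion, of_apply, if_neg hj, mul_ite, mul_one, mul_zero]
    rw [sum_eq_single ⟨j + 1, by omega⟩ (fun l _ hl => if_neg fun h => hl (Fin.ext h))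
      (by simp), if_pos rfl]
    push_cast
    ring_nf

theorem det_companion (h0 : c 0 = 1) (m : ℕ) : det (companion c m) = c m := by
  cases m with
  | zero => simp [h0]
  | succ m =>
    have row_zero (j : Fin m) : companion c (m + 1) 0 j.castSucc = 0 := by
      simp [companion, j.isLt.ne]
    have minor : (companion c (m + 1)).submatrix Fin.succ (Fin.last m).succAbove = 1 := by
      ext a b
      simp [companion, one_apply, Fin.ext_iff, b.isLt.ne]
    rw [det_succ_row_zero, Fin.sum_univ_castSucc, minor]
    simp only [row_zero, mul_zero, zero_mul, sum_const_zero, zero_add, det_one, mul_one]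
    simp [companion, ← mul_assoc, ← pow_add, Even.neg_one_pow (Even.add_self m)]

theorem det_map_jacobiTrudiRect {R' : Type*} [CommRing R'] (f : R →+* R') (m n : ℕ)
    (hvan : ∀ p : ℤ, n - m < p → p < n → f (toeplitzDet c p) = 0) :
    f (det (jacobiTrudiRect c m n)) = f (toeplitzDet c n) ^ m := by
  rw [RingHom.map_det, det_of_isUpperTriangular]
  · simp [jacobiTrudiRect]
  · intro i j hij
    simp only [id, Fin.lt_def] at hij
    exact hvan _ (by omega) (by omega)

theorem det_jacobiTrudiRect {m : ℕ} (h0 : c 0 = 1) (hneg : ∀ i < 0, c i = 0)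
    (htop : ∀ i, (m : ℤ) < i → c i = 0) (n : ℕ) :
    det (jacobiTrudiRect c m n) = c m ^ n := by
  induction n with
  | zero =>
    simpa [toeplitzDet_zero] using
      det_map_jacobiTrudiRect (RingHom.id R) m 0 fun p _ hp => toeplitzDet_of_neg hp
  | succ n ih => rw [jacobiTrudiRect_succ h0 hneg htop, det_mul, ih, det_companion h0, pow_succ]

end Toeplitz

theorem cVar_zero (m : ℕ) : cVar m 0 = 1 := by simp [cVar]

theorem cVar_of_neg {m : ℕ} {i : ℤ} (hi : i < 0) : cVar m i = 0 := by
  simp [cVar, hi.ne, show ¬ 1 ≤ i by omega]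

theorem cVar_of_gt {m : ℕ} {i : ℤ} (hi : (m : ℤ) < i) : cVar m i = 0 := by
  simp [cVar, show i ≠ 0 by omega, show ¬ i ≤ m by omega]

theorem sigmaP_eq_toeplitzDet (m : ℕ) : sigmaP m = toeplitzDet (cVar m) := rfl

theorem det_jacobiTrudiRect_cVar (m n : ℕ) :
    det (jacobiTrudiRect (cVar m) m n) = cVar m m ^ n :=
  det_jacobiTrudiRect (cVar_zero m) (fun _ => cVar_of_neg) (fun _ => cVar_of_gt) n

theorem neg_one_pow_succ_mul_pow {R : Type*} [CommRing R] (m : ℕ) (y : R) :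
    ((-1) ^ (m + 1) * y) ^ m = y ^ m := by
  rw [mul_pow, ← pow_mul, Nat.mul_comm, (Nat.even_mul_succ_self m).neg_one_pow, one_mul]

section QuantumRing

open Polynomial

variable {m k : ℕ} {α : ℚ}

theorem mk_C_sigmaP_eq_zero {p : ℤ} (h₁ : k + 1 ≤ p) (h₂ : p ≤ m + k - 1) :
    Ideal.Quotient.mk (qhIdeal m k α) (C (sigmaP m p)) = 0 :=
  Ideal.Quotient.eq_zero_iff_mem.2 <| Ideal.subset_span <| Or.inl ⟨p, ⟨h₁, h₂⟩, rfl⟩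

theorem mk_C_sigmaP_eq_neg_one_pow_mul :
    Ideal.Quotient.mk (qhIdeal m k α) (C (sigmaP m (m + k))) =
      (-1) ^ (m + 1) * Ideal.Quotient.mk (qhIdeal m k α) (C (MvPolynomial.C α) * X) := by
  have hrel : Ideal.Quotient.mk (qhIdeal m k α)
      (C (sigmaP m (m + k)) + (-1) ^ m * C (MvPolynomial.C α) * X) = 0 :=
    Ideal.Quotient.eq_zero_iff_mem.2 <| Ideal.subset_span <| Or.inr rfl
  rw [map_add, mul_assoc, map_mul, map_pow, map_neg, map_one] at hrel
  linear_combination hrel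

end QuantumRing

theorem cm_pow_n_general (m k : ℕ) (α : ℚ) :
    (Ideal.Quotient.mk (qhIdeal m k α) (Polynomial.C (cVar m (m : ℤ)))) ^ (m + k) =
      (Ideal.Quotient.mk (qhIdeal m k α)
          (Polynomial.C (MvPolynomial.C α) * Polynomial.X)) ^ m := by
  let ψ : MvPolynomial (Fin m) ℚ →+* Polynomial (MvPolynomial (Fin m) ℚ) ⧸ qhIdeal m k α :=
    (Ideal.Quotient.mk (qhIdeal m k α)).comp Polynomial.C
  set y := Ideal.Quotient.mk (qhIdeal m k α) (Polynomial.C (MvPolynomial.C α) * Polynomial.X)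
  have hvan (p : ℤ) (h₁ : ((m + k : ℕ) : ℤ) - m < p) (h₂ : p < (m + k : ℕ)) :
      ψ (toeplitzDet (cVar m) p) = 0 :=
    mk_C_sigmaP_eq_zero (by push_cast at h₁; omega) (by push_cast at h₂; omega)
  calc ψ (cVar m m) ^ (m + k) = ψ (det (jacobiTrudiRect (cVar m) m (m + k))) := by
        rw [det_jacobiTrudiRect_cVar, map_pow]
    _ = ψ (sigmaP m (m + k)) ^ m := by
        rw [sigmaP_eq_toeplitzDet]
        exact det_map_jacobiTrudiRect (R' := Polynomial (MvPolynomial (Fin m) ℚ) ⧸ qhIdeal m k α)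
          ψ m (m + k) hvan
    _ = ((-1) ^ (m + 1) * y) ^ m := by rw [RingHom.comp_apply, mk_C_sigmaP_eq_neg_one_pow_mul]
    _ = y ^ m := neg_one_pow_succ_mul_pow m y

/-- In `QH_α`, `c_m^n = (α q)^m` where `n = m + k`. -/
theorem cm_pow_n (m k : ℕ) (hm : 0 < m) (hk : 0 < k) (α : ℚ) :
    (Ideal.Quotient.mk (qhIdeal m k α) (Polynomial.C (cVar m (m : ℤ)))) ^ (m + k) =
      (Ideal.Quotient.mk (qhIdeal m k α)
          (Polynomial.C (MvPolynomial.C α) * Polynomial.X)) ^ m :=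
  cm_pow_n_general m k α
end

section
/- Let QH be an associative graded ℚ[q]-algebra with unit that is free as a ℚ[q]-module with homogeneous basis {τ_w : w ∈ W} (deg q_β > 0), and suppose all structure constants with respect to the ℚ-basis T = {q^d τ_w} are nonnegative. Suppose u₁,...,u_ℓ ∈ W are such that τ_{u_ℓ}···τ_{u_1} = c·q^d for some rational c > 0 and some monomial q^d. Then for every v ∈ W, the product τ_{u_1}·τ_v is a positive rational multiple of a single basis element q^e τ_w from T. -/
/-!
Put `Q = τ_{u_ℓ} ⋯ τ_{u_2}`, so that `Q τ_{u_1} = c q^d` and hence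
`Q (τ_{u_1} τ_v) = c q^d τ_v`.
Left multiplication by `Q` is injective, because its determinant over `ℚ[q]` divides
`(c q^d)^{|W|}`, and it preserves nonnegativity of coordinates in the `ℚ`-basis `q^m τ_w`.
So for any `q^m τ_w` occurring in `y = τ_{u_1} τ_v`, the image `Q (q^m τ_w)` is a nonzero
nonnegative multiple of `q^d τ_v`, hence proportional to `Q y`, and injectivity makes `y`
a positive multiple of `q^m τ_w`.
-/

namespace Module.Basis

section LinearOrderedField

variable {K V T : Type*} [Field K] [LinearOrder K] [IsStrictOrderedRing K]
  [AddCommGroup V] [Module K V]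

theorem exists_eq_smul_of_map_eq_smul (b : Module.Basis T K V) {f : V →ₗ[K] V}
    (hf : Function.Injective f) (hpos : ∀ x, 0 ≤ b.repr x → 0 ≤ b.repr (f x))
    {y : V} (hy : 0 ≤ b.repr y) {c : K} (hc : 0 < c) {t₀ : T} (hfy : f y = c • b t₀) :
    ∃ s, ∃ c' : K, 0 < c' ∧ y = c' • b s := by
  obtain ⟨s, hys⟩ : ∃ s, 0 < b.repr y s := by
    by_contra! h
    have hy0 : y = 0 :=
      b.repr.map_eq_zero_iff.mp (Finsupp.ext fun s => le_antisymm (h s) (hy s))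
    rw [hy0, map_zero] at hfy
    exact b.ne_zero t₀ ((smul_eq_zero.mp hfy.symm).resolve_left hc.ne')
  have hrest : 0 ≤ b.repr (f (y - b.repr y s • b s)) := hpos _ fun t => by
    rcases eq_or_ne t s with rfl | ht
    · simp
    · simpa [ht] using hy t
  have hbs : 0 ≤ b.repr (f (b s)) := hpos _ (by simp)
  set a := b.repr (f (b s)) t₀
  have hfbs : f (b s) = a • b t₀ := by
    refine b.repr.injective (Finsupp.ext fun t => ?_)
    rcases eq_or_ne t t₀ with rfl | ht
    · simp [a]
    -- `f y = f (y - y_s • b s) + y_s • f (b s)` vanishes off `t₀`; both summands are `≥ 0`.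
    · have hsplit : b.repr (f y) t =
          b.repr (f (y - b.repr y s • b s)) t + b.repr y s * b.repr (f (b s)) t := by
        conv_lhs => rw [← sub_add_cancel y (b.repr y s • b s)]
        simp
      rw [hfy, map_smul, Module.Basis.repr_self, Finsupp.smul_apply,
        Finsupp.single_eq_of_ne ht, smul_zero] at hsplit
      rw [map_smul, Module.Basis.repr_self, Finsupp.smul_apply, Finsupp.single_eq_of_ne ht,
        smul_zero]
      have hrest_t : 0 ≤ b.repr (f (y - b.repr y s • b s)) t := hrest t
      have hbs_t : 0 ≤ b.repr (f (b s)) t := hbs t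
      nlinarith
  have ha : 0 < a := lt_of_le_of_ne (hbs t₀) fun h =>
    b.ne_zero s (hf (by rw [hfbs, ← h, zero_smul, map_zero]))
  refine ⟨s, c / a, div_pos hc ha, hf ?_⟩
  rw [map_smul, hfbs, hfy, smul_smul, div_mul_cancel₀ _ ha.ne']

end LinearOrderedField

section OrderedSemiring

variable {K A T : Type*} [CommSemiring K] [PartialOrder K] [IsOrderedRing K]
  [Semiring A] [Module K A] [SMulCommClass K A A]

def mulLeftNonnegSubmonoid (b : Module.Basis T K A) : Submonoid A where
  carrier := {a | ∀ x, 0 ≤ b.repr x → 0 ≤ b.repr (a * x)}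
  one_mem' x hx := by simpa using hx
  mul_mem' ha hb x hx := by simpa only [mul_assoc] using ha _ (hb x hx)

theorem mem_mulLeftNonnegSubmonoid_of_forall (b : Module.Basis T K A) {a : A}
    (ha : ∀ t, 0 ≤ b.repr (a * b t)) : a ∈ b.mulLeftNonnegSubmonoid := by
  intro x hx t
  rw [← b.linearCombination_repr x, Finsupp.linearCombination_apply, Finsupp.sum, Finset.mul_sum,
    map_sum, Finsupp.finsetSum_apply]
  refine Finset.sum_nonneg fun s _ => ?_
  rw [mul_smul_comm, map_smul, Finsupp.smul_apply, smul_eq_mul]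
  exact mul_nonneg (hx s) (ha s t)

end OrderedSemiring

end Module.Basis

theorem LinearMap.injective_mulLeft_of_mul_eq_algebraMap {R A : Type*} [CommRing R] [IsDomain R]
    [Ring A] [Algebra R A] [Module.Free R A] [Module.Finite R A] {a b : A} {r : R}
    (hr : r ≠ 0) (hab : a * b = algebraMap R A r) :
    Function.Injective (LinearMap.mulLeft R a) := by
  have hdet : LinearMap.det (LinearMap.mulLeft R a) * LinearMap.det (LinearMap.mulLeft R b) =
      r ^ Module.finrank R A := by
    have hscalar : LinearMap.mulLeft R (algebraMap R A r) = r • LinearMap.id := by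
      ext x
      simp [Algebra.smul_def]
    rw [← LinearMap.det_comp, ← LinearMap.mulLeft_mul, hab, hscalar, LinearMap.det_smul,
      LinearMap.det_id, mul_one]
  have hdet_a : LinearMap.det (LinearMap.mulLeft R a) ≠ 0 :=
    left_ne_zero_of_mul (hdet ▸ pow_ne_zero _ hr)
  exact LinearMap.ker_eq_bot.mp (not_not.mp (LinearMap.det_eq_zero_iff_ker_ne_bot.not.mp hdet_a))

namespace MvPolynomial

section MonomialSmulBasis

variable {K σ W A : Type*} [CommSemiring K] [Semiring A] [Algebra K A]
  [Algebra (MvPolynomial σ K) A] [IsScalarTower K (MvPolynomial σ K) A]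
  (τ : Module.Basis W (MvPolynomial σ K) A)

theorem smulTower_basisMonomials_repr (x : A) (m : σ →₀ ℕ) (w : W) :
    ((basisMonomials σ K).smulTower τ).repr x (m, w) = coeff m (τ.repr x w) :=
  rfl

theorem smul_smulTower_basisMonomials (a : K) (m : σ →₀ ℕ) (w : W) :
    a • (basisMonomials σ K).smulTower τ (m, w) =
      algebraMap (MvPolynomial σ K) A (monomial m a) * τ w := by
  rw [Module.Basis.smulTower_apply, coe_basisMonomials, ← smul_assoc, smul_monomial, smul_eq_mul,
    mul_one, Algebra.smul_def]

variable [PartialOrder K] [IsOrderedRing K]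

theorem smulTower_basisMonomials_repr_monomial_smul_nonneg {x : A}
    (hx : 0 ≤ ((basisMonomials σ K).smulTower τ).repr x) (m : σ →₀ ℕ) :
    0 ≤ ((basisMonomials σ K).smulTower τ).repr (monomial m (1 : K) • x) := by
  rintro ⟨n, w⟩
  rw [smulTower_basisMonomials_repr, map_smul, Finsupp.smul_apply, smul_eq_mul,
    coeff_monomial_mul']
  split_ifs
  · exact mul_nonneg zero_le_one (hx (n - m, w))
  · exact le_rfl

theorem basis_mem_mulLeftNonnegSubmonoid
    (hτ : ∀ u v, 0 ≤ ((basisMonomials σ K).smulTower τ).repr (τ u * τ v)) (u : W) :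
    τ u ∈ ((basisMonomials σ K).smulTower τ).mulLeftNonnegSubmonoid := by
  refine Module.Basis.mem_mulLeftNonnegSubmonoid_of_forall _ fun ⟨m, w⟩ => ?_
  rw [Module.Basis.smulTower_apply, coe_basisMonomials, mul_smul_comm]
  exact smulTower_basisMonomials_repr_monomial_smul_nonneg τ (hτ u w) m

end MonomialSmulBasis

end MvPolynomial

open MvPolynomial

theorem basis_to_basis_general
    (ι W QH : Type) [Fintype W] [Ring QH]
    [Algebra ℚ QH] [Algebra (MvPolynomial ι ℚ) QH] [IsScalarTower ℚ (MvPolynomial ι ℚ) QH]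
    (τ : Module.Basis W (MvPolynomial ι ℚ) QH)
    (hnonneg : ∀ (u v w : W) (d : ι →₀ ℕ),
      0 ≤ MvPolynomial.coeff d (τ.repr (τ u * τ v) w))
    (l : ℕ) (hl : 0 < l) (u : Fin l → W) (c : ℚ) (hc : 0 < c) (d : ι →₀ ℕ)
    (hprod : (List.ofFn fun i : Fin l => τ (u i.rev)).prod =
      algebraMap (MvPolynomial ι ℚ) QH (MvPolynomial.monomial d c)) :
    ∀ v : W, ∃ (w : W) (e : ι →₀ ℕ) (c' : ℚ), 0 < c' ∧
      τ (u ⟨0, hl⟩) * τ v =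
        algebraMap (MvPolynomial ι ℚ) QH (MvPolynomial.monomial e c') * τ w := by
  intro v
  obtain ⟨n, rfl⟩ : ∃ n, l = n + 1 := ⟨l - 1, by omega⟩
  set T := (basisMonomials ι ℚ).smulTower τ
  have hT : ∀ u v, 0 ≤ T.repr (τ u * τ v) := fun u v ⟨m, w⟩ => hnonneg u v w m
  set Q := (List.ofFn fun i : Fin n => τ (u i.castSucc.rev)).prod
  have hQu : Q * τ (u ⟨0, hl⟩) = algebraMap (MvPolynomial ι ℚ) QH (monomial d c) := by
    rw [← hprod, List.ofFn_succ', List.prod_concat, Fin.rev_last]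
    rfl
  have : Module.Finite (MvPolynomial ι ℚ) QH := .of_basis τ
  have : Module.Free (MvPolynomial ι ℚ) QH := .of_basis τ
  have hQinj : Function.Injective (LinearMap.mulLeft ℚ Q) :=
    LinearMap.injective_mulLeft_of_mul_eq_algebraMap (R := MvPolynomial ι ℚ)
      (by simpa using hc.ne') hQu
  have hQpos : Q ∈ T.mulLeftNonnegSubmonoid :=
    list_prod_mem (by simpa [List.mem_ofFn] using fun i => basis_mem_mulLeftNonnegSubmonoid τ hT _)
  have hQy : Q * (τ (u ⟨0, hl⟩) * τ v) = c • T (d, v) := by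
    rw [← mul_assoc, hQu, smul_smulTower_basisMonomials]
  obtain ⟨⟨e, w⟩, c', hc', hy⟩ :=
    T.exists_eq_smul_of_map_eq_smul hQinj hQpos (hT _ _) hc hQy
  exact ⟨w, e, c', hc', by rw [hy, smul_smulTower_basisMonomials]⟩

/-- Lemma on non-negative quantum deformations: if `QH` is a graded associative
unital `ℚ[q]`-algebra (with `ℚ[q] = MvPolynomial ι ℚ`, each variable of positive
degree), free as a `ℚ[q]`-module with homogeneous basis `(τ_w)_{w ∈ W}`, whose
structure constants with respect to the `ℚ`-basis `{q^d τ_w}` are non-negative,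
and if some product `τ_{u_ℓ} ⋯ τ_{u_1}` equals `c q^d` with `c > 0`, then for
every `v ∈ W` the product `τ_{u_1} τ_v` is a positive rational multiple of a
single basis element `q^e τ_w`. -/
theorem basis_to_basis
    (ι W QH : Type) [Fintype ι] [Fintype W] [Ring QH]
    [Algebra ℚ QH] [Algebra (MvPolynomial ι ℚ) QH] [IsScalarTower ℚ (MvPolynomial ι ℚ) QH]
    (𝒜 : ℕ → Submodule ℚ QH) [GradedRing 𝒜]
    (deg : ι → ℕ) (hdeg : ∀ β, 0 < deg β)
    (hq : ∀ β, algebraMap (MvPolynomial ι ℚ) QH (MvPolynomial.X β) ∈ 𝒜 (deg β))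
    (τ : Module.Basis W (MvPolynomial ι ℚ) QH)
    (degτ : W → ℕ) (hτ : ∀ w, τ w ∈ 𝒜 (degτ w))
    (hnonneg : ∀ (u v w : W) (d : ι →₀ ℕ),
      0 ≤ MvPolynomial.coeff d (τ.repr (τ u * τ v) w))
    (l : ℕ) (hl : 0 < l) (u : Fin l → W) (c : ℚ) (hc : 0 < c) (d : ι →₀ ℕ)
    (hprod : (List.ofFn fun i : Fin l => τ (u i.rev)).prod =
      algebraMap (MvPolynomial ι ℚ) QH (MvPolynomial.monomial d c)) :
    ∀ v : W, ∃ (w : W) (e : ι →₀ ℕ) (c' : ℚ), 0 < c' ∧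
      τ (u ⟨0, hl⟩) * τ v =
        algebraMap (MvPolynomial ι ℚ) QH (MvPolynomial.monomial e c') * τ w :=
  basis_to_basis_general ι W QH τ hnonneg l hl u c hc d hprod
end
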